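/- arXiv:2512.19553 — 6 statements merged into one kernel-verified Lean document; each statement's English description precedes it below -/
import Mathlib

section
/- Under consistency, no unmeasured confounding, and positivity, the average treatment effect is identified by the g-formula: E[Y¹ − Y⁰] = E[μ(1,L) − μ(0,L)]. -/
open MeasureTheory ProbabilityTheory

private lemma intg_of_bdd {Ω : Type*} {m0 : MeasurableSpace Ω} {P : Measure Ω}
    [IsFiniteMeasure P] {f : Ω → ℝ} (hf : AEStronglyMeasurable f P) {c : ℝ}
    (hb : ∀ᵐ ω ∂P, |f ω| ≤ c) : Integrable f P :=
  ⟨hf, HasFiniteIntegral.of_bounded (C := c) (by simpa [Real.norm_eq_abs] using hb)⟩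

private lemma abs3 {a b c d e f' : ℝ} (h1 : |a| ≤ d) (h2 : |b| ≤ e) (h3 : |c| ≤ f') :
    |a * b * c| ≤ d * e * f' := by
  have hd : (0:ℝ) ≤ d := (abs_nonneg a).trans h1
  have he : (0:ℝ) ≤ e := (abs_nonneg b).trans h2
  calc |a * b * c| = |a| * |b| * |c| := by rw [abs_mul, abs_mul]
    _ ≤ d * e * f' :=
      mul_le_mul (mul_le_mul h1 h2 (abs_nonneg b) hd) h3 (abs_nonneg c) (mul_nonneg hd he)

private lemma key_pull {Ω : Type*} {m m0 : MeasurableSpace Ω} (hm : m ≤ m0) (P : Measure Ω)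
    [IsProbabilityMeasure P] {X W : Ω → ℝ} (hX : Integrable X P)
    (hW : StronglyMeasurable[m] W) (hWX : Integrable (fun ω => W ω * X ω) P) :
    ∫ ω, W ω * X ω ∂P = ∫ ω, W ω * (P[X|m]) ω ∂P := by
  have h1 : ∫ ω, (P[fun ω => W ω * X ω|m]) ω ∂P = ∫ ω, W ω * X ω ∂P :=
    integral_condExp hm
  rw [← h1]
  exact integral_congr_ae (condExp_mul_of_stronglyMeasurable_left hW hWX hX)

/-- Replace a `{0,1}`-valued treatment indicator by its conditional expectation inside an
integral against a function of a conditionally independent quantity and a weight. -/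
private lemma condexp_swap {Ω : Type*} {m : MeasurableSpace Ω} [mΩ : MeasurableSpace Ω]
    [StandardBorelSpace Ω] (P : Measure Ω) [IsProbabilityMeasure P]
    {E : Type*} [MeasurableSpace E] {pr : Ω → E} (hpr : Measurable pr)
    {A : Ω → ℝ} (hA : Measurable A) (hA01 : ∀ ω, A ω = 0 ∨ A ω = 1)
    (hm : m ≤ mΩ) (hNUC : CondIndepFun m hm pr A P)
    (φ : E → ℝ) (hφ : Measurable φ) (Cφ : ℝ) (hφb : ∀ p, |φ p| ≤ Cφ)
    (W : Ω → ℝ) (hW : StronglyMeasurable[m] W) (cW : ℝ) (hWb : ∀ ω, |W ω| ≤ cW) :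
    ∫ ω, A ω * φ (pr ω) * W ω ∂P = ∫ ω, (P[A|m]) ω * φ (pr ω) * W ω ∂P := by
  classical
  have hintbdd : ∀ {f : Ω → ℝ}, Measurable f → ∀ c : ℝ, (∀ᵐ ω ∂P, |f ω| ≤ c) →
      Integrable f P := fun hf c hb => intg_of_bdd hf.aestronglyMeasurable hb
  have hAb : ∀ ω, |A ω| ≤ 1 := by
    intro ω; rcases hA01 ω with h | h <;> simp [h]
  set sA : Set Ω := A ⁻¹' {1} with hsA_def
  have hsA : MeasurableSet sA := hA (measurableSet_singleton 1)
  have hAind : A = sA.indicator (fun _ => (1:ℝ)) := by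
    funext ω
    rcases hA01 ω with h | h
    · have : ω ∉ sA := by simp [hsA_def, h]
      simp [this, h]
    · have : ω ∈ sA := by simp [hsA_def, h]
      simp [this, h]
  have hcondA : P[A|m] = P⟦sA|m⟧ := by rw [hAind]
  have hfact := (condIndepFun_iff m hm pr A hpr hA P).mp hNUC
  have hWmeas : Measurable W := (hW.mono hm).measurable
  -- indicator step
  have hset : ∀ t : Set Ω, MeasurableSet[MeasurableSpace.comap pr inferInstance] t →
      ∫ ω, A ω * (t.indicator (fun _ => (1:ℝ)) ω) * W ω ∂P
        = ∫ ω, (P[A|m]) ω * (t.indicator (fun _ => (1:ℝ)) ω) * W ω ∂P := by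
    intro t ht
    have htm0 : MeasurableSet t := hpr.comap_le t ht
    set it : Ω → ℝ := t.indicator (fun _ => (1:ℝ)) with hit_def
    set ist : Ω → ℝ := (sA ∩ t).indicator (fun _ => (1:ℝ)) with hist_def
    have hit_meas : Measurable it := measurable_const.indicator htm0
    have hist_meas : Measurable ist := measurable_const.indicator (hsA.inter htm0)
    have hit_b : ∀ ω, |it ω| ≤ 1 := by
      intro ω; rw [hit_def]; by_cases h : ω ∈ t <;> simp [h]
    have hist_b : ∀ ω, |ist ω| ≤ 1 := by
      intro ω; rw [hist_def]; by_cases h : ω ∈ sA ∩ t <;> simp [h]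
    have hit_int : Integrable it P := hintbdd hit_meas 1 (ae_of_all _ hit_b)
    have hist_int : Integrable ist P := hintbdd hist_meas 1 (ae_of_all _ hist_b)
    have hWist_int : Integrable (fun ω => W ω * ist ω) P := by
      refine hintbdd (hWmeas.mul hist_meas) (cW * 1) (ae_of_all _ fun ω => ?_)
      rw [abs_mul]
      exact mul_le_mul (hWb ω) (hist_b ω) (abs_nonneg _) ((abs_nonneg _).trans (hWb ω))
    have step1 : ∫ ω, W ω * ist ω ∂P = ∫ ω, W ω * (P[ist|m]) ω ∂P :=
      key_pull hm P hist_int hW hWist_int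
    have hts : (sA ∩ t) = t ∩ sA := Set.inter_comm _ _
    have htm : MeasurableSet[MeasurableSpace.comap A inferInstance] sA :=
      ⟨{1}, measurableSet_singleton 1, rfl⟩
    have hf2 : (P⟦t ∩ sA|m⟧) =ᵐ[P] (P⟦t|m⟧) * (P⟦sA|m⟧) := hfact t sA ht htm
    have hPist : P[ist|m] = P⟦t ∩ sA|m⟧ := by rw [hist_def, hts]
    have step2 : ∫ ω, W ω * (P[ist|m]) ω ∂P
        = ∫ ω, (W ω * (P⟦sA|m⟧) ω) * (P⟦t|m⟧) ω ∂P := by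
      rw [hPist]
      refine integral_congr_ae ?_
      filter_upwards [hf2] with ω h
      rw [h]; simp only [Pi.mul_apply]; ring
    have hW' : StronglyMeasurable[m] (fun ω => W ω * (P⟦sA|m⟧) ω) :=
      hW.mul stronglyMeasurable_condExp
    have hW'it_int : Integrable (fun ω => (fun ω => W ω * (P⟦sA|m⟧) ω) ω * it ω) P := by
      have heq : (fun ω => (fun ω => W ω * (P⟦sA|m⟧) ω) ω * it ω)
          = fun ω => (W ω * it ω) * (P⟦sA|m⟧) ω := by funext ω; ring
      rw [heq]
      refine Integrable.bdd_mul (c := cW * 1) integrable_condExp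
        ((hWmeas.mul hit_meas).aestronglyMeasurable) (ae_of_all _ fun ω => ?_)
      rw [Real.norm_eq_abs, abs_mul]
      exact mul_le_mul (hWb ω) (hit_b ω) (abs_nonneg _) ((abs_nonneg _).trans (hWb ω))
    have step3 : ∫ ω, (W ω * (P⟦sA|m⟧) ω) * it ω ∂P
        = ∫ ω, (W ω * (P⟦sA|m⟧) ω) * (P[it|m]) ω ∂P :=
      key_pull hm P hit_int hW' hW'it_int
    have hAit : ∀ ω, A ω * it ω * W ω = W ω * ist ω := by
      intro ω
      have hAω : A ω = sA.indicator (fun _ => (1:ℝ)) ω := by rw [hAind]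
      by_cases h1 : ω ∈ sA <;> by_cases h2 : ω ∈ t <;>
        simp [hit_def, hist_def, hAω, h1, h2, Set.indicator_of_mem, Set.indicator_of_notMem,
          Set.mem_inter_iff]
    have hPit : P[it|m] = P⟦t|m⟧ := by rw [hit_def]
    calc ∫ ω, A ω * it ω * W ω ∂P = ∫ ω, W ω * ist ω ∂P := by
          refine integral_congr_ae (ae_of_all _ fun ω => ?_); exact hAit ω
      _ = ∫ ω, W ω * (P[ist|m]) ω ∂P := step1
      _ = ∫ ω, (W ω * (P⟦sA|m⟧) ω) * (P⟦t|m⟧) ω ∂P := step2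
      _ = ∫ ω, (W ω * (P⟦sA|m⟧) ω) * it ω ∂P := by rw [← hPit, ← step3]
      _ = ∫ ω, (P[A|m]) ω * it ω * W ω ∂P := by
          rw [hcondA]
          refine integral_congr_ae (ae_of_all _ fun ω => ?_); beta_reduce; ring
  -- simple-function step
  have hsimp : ∀ ψ : SimpleFunc E ℝ,
      ∫ ω, A ω * ψ (pr ω) * W ω ∂P = ∫ ω, (P[A|m]) ω * ψ (pr ω) * W ω ∂P := by
    intro ψ
    induction ψ using MeasureTheory.SimpleFunc.induction with
    | const c hs =>
      rename_i s
      have h1 : ∀ ω, (SimpleFunc.piecewise s hs (SimpleFunc.const _ c)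
          (SimpleFunc.const _ (0:ℝ))) (pr ω)
          = c * (pr ⁻¹' s).indicator (fun _ => (1:ℝ)) ω := by
        intro ω
        by_cases h : pr ω ∈ s <;>
          simp [SimpleFunc.coe_piecewise, Set.piecewise, h, Set.indicator]
      have ht : MeasurableSet[MeasurableSpace.comap pr inferInstance] (pr ⁻¹' s) :=
        ⟨s, hs, rfl⟩
      have hkey := hset (pr ⁻¹' s) ht
      calc ∫ ω, A ω * (SimpleFunc.piecewise s hs (SimpleFunc.const _ c)
            (SimpleFunc.const _ (0:ℝ))) (pr ω) * W ω ∂P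
          = ∫ ω, c * (A ω * ((pr ⁻¹' s).indicator (fun _ => (1:ℝ)) ω) * W ω) ∂P := by
            refine integral_congr_ae (ae_of_all _ fun ω => ?_); beta_reduce; rw [h1]; ring
        _ = c * ∫ ω, A ω * ((pr ⁻¹' s).indicator (fun _ => (1:ℝ)) ω) * W ω ∂P := by
            rw [integral_const_mul]
        _ = c * ∫ ω, (P[A|m]) ω * ((pr ⁻¹' s).indicator (fun _ => (1:ℝ)) ω) * W ω ∂P := by
            rw [hkey]
        _ = ∫ ω, c * ((P[A|m]) ω * ((pr ⁻¹' s).indicator (fun _ => (1:ℝ)) ω) * W ω) ∂P := by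
            rw [integral_const_mul]
        _ = ∫ ω, (P[A|m]) ω * (SimpleFunc.piecewise s hs (SimpleFunc.const _ c)
            (SimpleFunc.const _ (0:ℝ))) (pr ω) * W ω ∂P := by
            refine integral_congr_ae (ae_of_all _ fun ω => ?_); beta_reduce; rw [h1]; ring
    | @add f g _ hf hg =>
      obtain ⟨Cf, hCf⟩ := f.exists_forall_norm_le
      obtain ⟨Cg, hCg⟩ := g.exists_forall_norm_le
      have hfm : Measurable (fun ω => f (pr ω)) := f.measurable.comp hpr
      have hgm : Measurable (fun ω => g (pr ω)) := g.measurable.comp hpr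
      have hintf : Integrable (fun ω => A ω * f (pr ω) * W ω) P := by
        refine hintbdd ((hA.mul hfm).mul hWmeas) (1 * Cf * cW) (ae_of_all _ fun ω => ?_)
        exact abs3 (hAb ω) (by simpa [Real.norm_eq_abs] using hCf (pr ω)) (hWb ω)
      have hintg : Integrable (fun ω => A ω * g (pr ω) * W ω) P := by
        refine hintbdd ((hA.mul hgm).mul hWmeas) (1 * Cg * cW) (ae_of_all _ fun ω => ?_)
        exact abs3 (hAb ω) (by simpa [Real.norm_eq_abs] using hCg (pr ω)) (hWb ω)
      have hintf' : Integrable (fun ω => (P[A|m]) ω * f (pr ω) * W ω) P := by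
        have heq : (fun ω => (P[A|m]) ω * f (pr ω) * W ω)
            = fun ω => (f (pr ω) * W ω) * (P[A|m]) ω := by funext ω; ring
        rw [heq]
        refine Integrable.bdd_mul (c := Cf * cW) integrable_condExp
          ((hfm.mul hWmeas).aestronglyMeasurable) (ae_of_all _ fun ω => ?_)
        rw [Real.norm_eq_abs, abs_mul]
        refine mul_le_mul (by simpa [Real.norm_eq_abs] using hCf (pr ω)) (hWb ω)
          (abs_nonneg _) ((norm_nonneg _).trans (hCf (pr ω)))
      have hintg' : Integrable (fun ω => (P[A|m]) ω * g (pr ω) * W ω) P := by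
        have heq : (fun ω => (P[A|m]) ω * g (pr ω) * W ω)
            = fun ω => (g (pr ω) * W ω) * (P[A|m]) ω := by funext ω; ring
        rw [heq]
        refine Integrable.bdd_mul (c := Cg * cW) integrable_condExp
          ((hgm.mul hWmeas).aestronglyMeasurable) (ae_of_all _ fun ω => ?_)
        rw [Real.norm_eq_abs, abs_mul]
        refine mul_le_mul (by simpa [Real.norm_eq_abs] using hCg (pr ω)) (hWb ω)
          (abs_nonneg _) ((norm_nonneg _).trans (hCg (pr ω)))
      have hadd : ∀ ω, (f + g) (pr ω) = f (pr ω) + g (pr ω) := by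
        intro ω; simp
      calc ∫ ω, A ω * (f + g) (pr ω) * W ω ∂P
          = ∫ ω, (A ω * f (pr ω) * W ω + A ω * g (pr ω) * W ω) ∂P := by
            refine integral_congr_ae (ae_of_all _ fun ω => ?_); beta_reduce; rw [hadd]; ring
        _ = (∫ ω, A ω * f (pr ω) * W ω ∂P) + ∫ ω, A ω * g (pr ω) * W ω ∂P :=
            integral_add hintf hintg
        _ = (∫ ω, (P[A|m]) ω * f (pr ω) * W ω ∂P)
              + ∫ ω, (P[A|m]) ω * g (pr ω) * W ω ∂P := by rw [hf, hg]
        _ = ∫ ω, ((P[A|m]) ω * f (pr ω) * W ω + (P[A|m]) ω * g (pr ω) * W ω) ∂P :=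
            (integral_add hintf' hintg').symm
        _ = ∫ ω, (P[A|m]) ω * (f + g) (pr ω) * W ω ∂P := by
            refine integral_congr_ae (ae_of_all _ fun ω => ?_); beta_reduce; rw [hadd]; ring
  -- approximation step
  set ψn : ℕ → SimpleFunc E ℝ :=
    fun n => SimpleFunc.approxOn φ hφ Set.univ 0 (Set.mem_univ 0) n with hψn_def
  have htend : ∀ p, Filter.Tendsto (fun n => ψn n p) Filter.atTop (nhds (φ p)) := by
    intro p
    exact SimpleFunc.tendsto_approxOn hφ (Set.mem_univ 0) (by simp)
  have hbnd : ∀ n p, |ψn n p| ≤ Cφ + Cφ := by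
    intro n p
    have h := SimpleFunc.norm_approxOn_zero_le hφ (Set.mem_univ 0) p n
    rw [Real.norm_eq_abs, Real.norm_eq_abs] at h
    exact h.trans (add_le_add (hφb p) (hφb p))
  have h1 : Filter.Tendsto (fun n => ∫ ω, A ω * (ψn n) (pr ω) * W ω ∂P)
      Filter.atTop (nhds (∫ ω, A ω * φ (pr ω) * W ω ∂P)) := by
    refine tendsto_integral_of_dominated_convergence (fun _ => 1 * (Cφ + Cφ) * cW)
      (fun n => ((hA.mul ((ψn n).measurable.comp hpr)).mul hWmeas).aestronglyMeasurable)
      (integrable_const _) (fun n => ae_of_all _ fun ω => ?_) (ae_of_all _ fun ω => ?_)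
    · rw [Real.norm_eq_abs]
      exact abs3 (hAb ω) (hbnd n (pr ω)) (hWb ω)
    · exact ((htend (pr ω)).const_mul (A ω)).mul_const (W ω)
  have h2 : Filter.Tendsto (fun n => ∫ ω, (P[A|m]) ω * (ψn n) (pr ω) * W ω ∂P)
      Filter.atTop (nhds (∫ ω, (P[A|m]) ω * φ (pr ω) * W ω ∂P)) := by
    have hcm : AEStronglyMeasurable (P[A|m]) P :=
      (stronglyMeasurable_condExp.mono hm).aestronglyMeasurable
    refine tendsto_integral_of_dominated_convergence
      (fun ω => |(P[A|m]) ω| * ((Cφ + Cφ) * cW))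
      (fun n => (hcm.mul ((ψn n).measurable.comp hpr).aestronglyMeasurable).mul
        hWmeas.aestronglyMeasurable)
      (integrable_condExp.abs.mul_const _) (fun n => ae_of_all _ fun ω => ?_)
      (ae_of_all _ fun ω => ?_)
    · rw [Real.norm_eq_abs, mul_assoc, abs_mul]
      refine mul_le_mul_of_nonneg_left ?_ (abs_nonneg _)
      rw [abs_mul]
      exact mul_le_mul (hbnd n (pr ω)) (hWb ω) (abs_nonneg _)
        ((abs_nonneg _).trans (hbnd n (pr ω)))
    · exact ((htend (pr ω)).const_mul ((P[A|m]) ω)).mul_const (W ω)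
  exact tendsto_nhds_unique (h1.congr fun n => hsimp (ψn n)) h2

/-- Under consistency, no unmeasured confounding, and positivity, the
average treatment effect is identified by the g-formula:
`E[Y¹ − Y⁰] = E[μ(1,L) − μ(0,L)]`. -/
theorem g_formula_identification
    {Ω : Type*} [MeasurableSpace Ω] [StandardBorelSpace Ω]
    (P : Measure Ω) [IsProbabilityMeasure P]
    {𝓛 : Type*} [MeasurableSpace 𝓛] [StandardBorelSpace 𝓛]
    (L : Ω → 𝓛) (hL : Measurable L)
    (A : Ω → ℝ) (hA : Measurable A) (hA01 : ∀ ω, A ω = 0 ∨ A ω = 1)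
    (Y Y0 Y1 : Ω → ℝ) (hY : Measurable Y) (hY0 : Measurable Y0) (hY1 : Measurable Y1)
    (C : ℝ) (hYb : ∀ᵐ ω ∂P, |Y ω| ≤ C) (hY0b : ∀ᵐ ω ∂P, |Y0 ω| ≤ C)
    (hY1b : ∀ᵐ ω ∂P, |Y1 ω| ≤ C)
    -- consistency
    (hcons : ∀ᵐ ω ∂P, Y ω = A ω * Y1 ω + (1 - A ω) * Y0 ω)
    -- no unmeasured confounding: (Y⁰, Y¹) ⫫ A ∣ σ(L)
    (hNUC : CondIndepFun (MeasurableSpace.comap L inferInstance) hL.comap_le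
      (fun ω => (Y0 ω, Y1 ω)) A P)
    -- positivity
    (ε : ℝ) (hε : ε ∈ Set.Ioo (0 : ℝ) (1 / 2))
    (π : 𝓛 → ℝ) (hπ : Measurable π)
    (hπver : (fun ω => π (L ω)) =ᵐ[P] P[A | MeasurableSpace.comap L inferInstance])
    (hπbd : ∀ᵐ ω ∂P, ε ≤ π (L ω) ∧ π (L ω) ≤ 1 - ε)
    -- outcome regressions
    (μ1 μ0 : 𝓛 → ℝ) (hμ1 : Measurable μ1) (hμ0 : Measurable μ0)
    (Cμ : ℝ) (hμ1b : ∀ ℓ, |μ1 ℓ| ≤ Cμ) (hμ0b : ∀ ℓ, |μ0 ℓ| ≤ Cμ)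
    (hreg1 : ∀ g : 𝓛 → ℝ, Measurable g → (∃ Cg, ∀ ℓ, |g ℓ| ≤ Cg) →
      ∫ ω, A ω * Y ω * g (L ω) ∂P = ∫ ω, A ω * μ1 (L ω) * g (L ω) ∂P)
    (hreg0 : ∀ g : 𝓛 → ℝ, Measurable g → (∃ Cg, ∀ ℓ, |g ℓ| ≤ Cg) →
      ∫ ω, (1 - A ω) * Y ω * g (L ω) ∂P = ∫ ω, (1 - A ω) * μ0 (L ω) * g (L ω) ∂P) :
    ∫ ω, (Y1 ω - Y0 ω) ∂P = ∫ ω, (μ1 (L ω) - μ0 (L ω)) ∂P := by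
  classical
  obtain ⟨hε0, hεhalf⟩ := hε
  have hm : MeasurableSpace.comap L inferInstance ≤ _ := hL.comap_le
  have hpr : Measurable (fun ω => (Y0 ω, Y1 ω)) := hY0.prodMk hY1
  have hLm : Measurable[MeasurableSpace.comap L inferInstance] L := fun s hs => ⟨s, hs, rfl⟩
  have hsm : ∀ {h : 𝓛 → ℝ}, Measurable h →
      StronglyMeasurable[MeasurableSpace.comap L inferInstance] (fun ω => h (L ω)) :=
    fun hh => (hh.comp hLm).stronglyMeasurable
  have hintbdd : ∀ {f : Ω → ℝ}, Measurable f → ∀ c : ℝ, (∀ᵐ ω ∂P, |f ω| ≤ c) →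
      Integrable f P := fun hf c hb => intg_of_bdd hf.aestronglyMeasurable hb
  have hAb : ∀ ω, |A ω| ≤ 1 := by
    intro ω; rcases hA01 ω with h | h <;> simp [h]
  have hAint : Integrable A P := hintbdd hA 1 (ae_of_all _ hAb)
  -- truncated propensity score
  have hε1 : ε ≤ 1 - ε := by linarith
  set π' : 𝓛 → ℝ := fun ℓ => max ε (min (π ℓ) (1 - ε)) with hπ'_def
  have hπ'meas : Measurable π' := measurable_const.max (hπ.min measurable_const)
  have hπ'lb : ∀ ℓ, ε ≤ π' ℓ := fun ℓ => le_max_left _ _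
  have hπ'ub : ∀ ℓ, π' ℓ ≤ 1 - ε := fun ℓ => max_le hε1 (min_le_right _ _)
  have hπ'pos : ∀ ℓ, 0 < π' ℓ := fun ℓ => lt_of_lt_of_le hε0 (hπ'lb ℓ)
  have h1π'pos : ∀ ℓ, 0 < 1 - π' ℓ := fun ℓ => by have := hπ'ub ℓ; linarith
  have hππ' : ∀ᵐ ω ∂P, π' (L ω) = π (L ω) := by
    filter_upwards [hπbd] with ω h
    rw [hπ'_def]; beta_reduce
    rw [min_eq_left h.2, max_eq_right h.1]
  -- weights
  set w1 : 𝓛 → ℝ := fun ℓ => (π' ℓ)⁻¹ with hw1_def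
  set w0 : 𝓛 → ℝ := fun ℓ => (1 - π' ℓ)⁻¹ with hw0_def
  have hw1meas : Measurable w1 := hπ'meas.inv
  have hw0meas : Measurable w0 := (measurable_const.sub hπ'meas).inv
  have hw1b : ∀ ℓ, |w1 ℓ| ≤ ε⁻¹ := by
    intro ℓ
    rw [hw1_def]; beta_reduce
    rw [abs_of_pos (inv_pos.mpr (hπ'pos ℓ))]
    exact inv_anti₀ hε0 (hπ'lb ℓ)
  have hw0b : ∀ ℓ, |w0 ℓ| ≤ ε⁻¹ := by
    intro ℓ
    rw [hw0_def]; beta_reduce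
    rw [abs_of_pos (inv_pos.mpr (h1π'pos ℓ))]
    refine inv_anti₀ hε0 ?_
    have := hπ'ub ℓ; linarith
  -- clipping
  set clip : ℝ → ℝ := fun x => max (-|C|) (min x |C|) with hclip_def
  have hclipmeas : Measurable clip := measurable_const.max (measurable_id.min measurable_const)
  have hclipb : ∀ x, |clip x| ≤ |C| := by
    intro x
    rw [abs_le]
    constructor
    · exact le_max_left _ _
    · exact max_le (neg_le_self (abs_nonneg C)) (min_le_right _ _)
  have hclipY1 : ∀ᵐ ω ∂P, clip (Y1 ω) = Y1 ω := by
    filter_upwards [hY1b] with ω h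
    have h' : |Y1 ω| ≤ |C| := h.trans (le_abs_self C)
    obtain ⟨h1, h2⟩ := abs_le.mp h'
    rw [hclip_def]; beta_reduce
    rw [min_eq_left h2, max_eq_right h1]
  have hclipY0 : ∀ᵐ ω ∂P, clip (Y0 ω) = Y0 ω := by
    filter_upwards [hY0b] with ω h
    have h' : |Y0 ω| ≤ |C| := h.trans (le_abs_self C)
    obtain ⟨h1, h2⟩ := abs_le.mp h'
    rw [hclip_def]; beta_reduce
    rw [min_eq_left h2, max_eq_right h1]
  set W1 : Ω → ℝ := fun ω => w1 (L ω) with hW1_def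
  set W0 : Ω → ℝ := fun ω => w0 (L ω) with hW0_def
  have hW1 : StronglyMeasurable[MeasurableSpace.comap L inferInstance] W1 := hsm hw1meas
  have hW0 : StronglyMeasurable[MeasurableSpace.comap L inferInstance] W0 := hsm hw0meas
  have hW1b : ∀ ω, |W1 ω| ≤ ε⁻¹ := fun ω => hw1b (L ω)
  have hW0b : ∀ ω, |W0 ω| ≤ ε⁻¹ := fun ω => hw0b (L ω)
  have hW1meas : Measurable W1 := hw1meas.comp hL
  have hW0meas : Measurable W0 := hw0meas.comp hL
  have hπL : ∀ᵐ ω ∂P, (P[A|MeasurableSpace.comap L inferInstance]) ω = π (L ω) := hπver.symm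
  -- treated arm
  have T1 : ∫ ω, Y1 ω ∂P = ∫ ω, μ1 (L ω) ∂P := by
    have E1 : ∫ ω, A ω * Y ω * w1 (L ω) ∂P = ∫ ω, A ω * μ1 (L ω) * w1 (L ω) ∂P :=
      hreg1 w1 hw1meas ⟨ε⁻¹, hw1b⟩
    set clips : ℝ × ℝ → ℝ := fun p => clip p.2 with hclips_def
    have hclipsmeas : Measurable clips := hclipmeas.comp measurable_snd
    have hclipsb : ∀ p, |clips p| ≤ |C| := fun p => hclipb p.2
    have hcrux := condexp_swap P hpr hA hA01 hm hNUC clips hclipsmeas |C| hclipsb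
      W1 hW1 ε⁻¹ hW1b
    have lhs : ∫ ω, A ω * Y ω * w1 (L ω) ∂P = ∫ ω, Y1 ω ∂P := by
      calc ∫ ω, A ω * Y ω * w1 (L ω) ∂P
          = ∫ ω, A ω * clips (Y0 ω, Y1 ω) * W1 ω ∂P := by
            refine integral_congr_ae ?_
            filter_upwards [hcons, hclipY1] with ω hc h1
            rcases hA01 ω with h | h <;> simp [hclips_def, h, hc, h1, hW1_def]
        _ = ∫ ω, (P[A|MeasurableSpace.comap L inferInstance]) ω * clips (Y0 ω, Y1 ω) * W1 ω ∂P :=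
            hcrux
        _ = ∫ ω, Y1 ω ∂P := by
            refine integral_congr_ae ?_
            filter_upwards [hπL, hclipY1, hππ'] with ω h1 h2 h3
            beta_reduce
            rw [h1]
            simp only [hclips_def, hW1_def]
            rw [h2, ← h3, hw1_def]
            beta_reduce
            rw [mul_comm (π' (L ω)) (Y1 ω), mul_assoc,
              mul_inv_cancel₀ (ne_of_gt (hπ'pos (L ω)))]
            ring
    have rhs : ∫ ω, A ω * μ1 (L ω) * w1 (L ω) ∂P = ∫ ω, μ1 (L ω) ∂P := by
      set W' : Ω → ℝ := fun ω => μ1 (L ω) * w1 (L ω) with hW'_def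
      have hW'sm : StronglyMeasurable[MeasurableSpace.comap L inferInstance] W' :=
        hsm (hμ1.mul hw1meas)
      have hW'b : ∀ ω, |W' ω| ≤ Cμ * ε⁻¹ := by
        intro ω
        rw [hW'_def]; beta_reduce
        rw [abs_mul]
        exact mul_le_mul (hμ1b (L ω)) (hw1b (L ω)) (abs_nonneg _) ((abs_nonneg _).trans (hμ1b (L ω)))
      have hW'A_int : Integrable (fun ω => W' ω * A ω) P := by
        refine hintbdd (((hμ1.comp hL).mul hW1meas).mul hA) (Cμ * ε⁻¹ * 1)
          (ae_of_all _ fun ω => ?_)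
        rw [abs_mul]
        exact mul_le_mul (hW'b ω) (hAb ω) (abs_nonneg _) ((abs_nonneg _).trans (hW'b ω))
      calc ∫ ω, A ω * μ1 (L ω) * w1 (L ω) ∂P = ∫ ω, W' ω * A ω ∂P := by
            refine integral_congr_ae (ae_of_all _ fun ω => ?_)
            rw [hW'_def]; beta_reduce; ring
        _ = ∫ ω, W' ω * (P[A|MeasurableSpace.comap L inferInstance]) ω ∂P :=
            key_pull hm P hAint hW'sm hW'A_int
        _ = ∫ ω, μ1 (L ω) ∂P := by
            refine integral_congr_ae ?_
            filter_upwards [hπL, hππ'] with ω h1 h3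
            beta_reduce
            rw [h1, hW'_def]
            beta_reduce
            rw [← h3, hw1_def]
            beta_reduce
            rw [mul_assoc, inv_mul_cancel₀ (ne_of_gt (hπ'pos (L ω))), mul_one]
    rw [← lhs, E1, rhs]
  -- control arm
  have T0 : ∫ ω, Y0 ω ∂P = ∫ ω, μ0 (L ω) ∂P := by
    have E0 : ∫ ω, (1 - A ω) * Y ω * w0 (L ω) ∂P
        = ∫ ω, (1 - A ω) * μ0 (L ω) * w0 (L ω) ∂P :=
      hreg0 w0 hw0meas ⟨ε⁻¹, hw0b⟩
    set clips : ℝ × ℝ → ℝ := fun p => clip p.1 with hclips_def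
    have hclipsmeas : Measurable clips := hclipmeas.comp measurable_fst
    have hclipsb : ∀ p, |clips p| ≤ |C| := fun p => hclipb p.1
    have hcrux := condexp_swap P hpr hA hA01 hm hNUC clips hclipsmeas |C| hclipsb
      W0 hW0 ε⁻¹ hW0b
    have hY0W0_int : Integrable (fun ω => Y0 ω * W0 ω) P := by
      refine hintbdd (hY0.mul hW0meas) (|C| * ε⁻¹) ?_
      filter_upwards [hY0b] with ω h
      rw [abs_mul]
      exact mul_le_mul (h.trans (le_abs_self C)) (hW0b ω) (abs_nonneg _) (abs_nonneg _)
    have hAY0W0_int : Integrable (fun ω => A ω * clips (Y0 ω, Y1 ω) * W0 ω) P := by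
      refine hintbdd ((hA.mul (hclipsmeas.comp hpr)).mul hW0meas) (1 * |C| * ε⁻¹)
        (ae_of_all _ fun ω => ?_)
      exact abs3 (hAb ω) (hclipsb (Y0 ω, Y1 ω)) (hW0b ω)
    have hπY0W0_int : Integrable (fun ω => π (L ω) * Y0 ω * W0 ω) P := by
      refine hintbdd (((hπ.comp hL).mul hY0).mul hW0meas) (1 * |C| * ε⁻¹) ?_
      filter_upwards [hY0b, hπbd] with ω h h2
      refine abs3 ?_ (h.trans (le_abs_self C)) (hW0b ω)
      rw [abs_le]
      constructor
      · linarith [h2.1]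
      · linarith [h2.2]
    have hA_cl : ∫ ω, A ω * clips (Y0 ω, Y1 ω) * W0 ω ∂P
        = ∫ ω, π (L ω) * Y0 ω * W0 ω ∂P := by
      rw [hcrux]
      refine integral_congr_ae ?_
      filter_upwards [hπL, hclipY0] with ω h1 h2
      beta_reduce
      rw [h1]
      simp only [hclips_def]
      rw [h2]
    have lhs : ∫ ω, (1 - A ω) * Y ω * w0 (L ω) ∂P = ∫ ω, Y0 ω ∂P := by
      calc ∫ ω, (1 - A ω) * Y ω * w0 (L ω) ∂P
          = ∫ ω, (Y0 ω * W0 ω - A ω * clips (Y0 ω, Y1 ω) * W0 ω) ∂P := by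
            refine integral_congr_ae ?_
            filter_upwards [hcons, hclipY0] with ω hc h0
            rcases hA01 ω with h | h <;>
              simp [hclips_def, h, hc, h0, hW0_def] <;> ring
        _ = (∫ ω, Y0 ω * W0 ω ∂P) - ∫ ω, A ω * clips (Y0 ω, Y1 ω) * W0 ω ∂P :=
            integral_sub hY0W0_int hAY0W0_int
        _ = (∫ ω, Y0 ω * W0 ω ∂P) - ∫ ω, π (L ω) * Y0 ω * W0 ω ∂P := by rw [hA_cl]
        _ = ∫ ω, (Y0 ω * W0 ω - π (L ω) * Y0 ω * W0 ω) ∂P :=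
            (integral_sub hY0W0_int hπY0W0_int).symm
        _ = ∫ ω, Y0 ω ∂P := by
            refine integral_congr_ae ?_
            filter_upwards [hππ'] with ω h3
            beta_reduce
            rw [hW0_def]
            beta_reduce
            rw [← h3, hw0_def]
            beta_reduce
            have hne : (1 - π' (L ω)) ≠ 0 := ne_of_gt (h1π'pos (L ω))
            field_simp
    have rhs : ∫ ω, (1 - A ω) * μ0 (L ω) * w0 (L ω) ∂P = ∫ ω, μ0 (L ω) ∂P := by
      set W' : Ω → ℝ := fun ω => μ0 (L ω) * w0 (L ω) with hW'_def
      have hW'sm : StronglyMeasurable[MeasurableSpace.comap L inferInstance] W' :=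
        hsm (hμ0.mul hw0meas)
      have hW'meas : Measurable W' := (hμ0.comp hL).mul hW0meas
      have hW'b : ∀ ω, |W' ω| ≤ Cμ * ε⁻¹ := by
        intro ω
        rw [hW'_def]; beta_reduce
        rw [abs_mul]
        exact mul_le_mul (hμ0b (L ω)) (hw0b (L ω)) (abs_nonneg _) ((abs_nonneg _).trans (hμ0b (L ω)))
      have hW'_int : Integrable W' P := hintbdd hW'meas (Cμ * ε⁻¹) (ae_of_all _ hW'b)
      have hW'A_int : Integrable (fun ω => W' ω * A ω) P := by
        refine hintbdd (hW'meas.mul hA) (Cμ * ε⁻¹ * 1) (ae_of_all _ fun ω => ?_)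
        rw [abs_mul]
        exact mul_le_mul (hW'b ω) (hAb ω) (abs_nonneg _) ((abs_nonneg _).trans (hW'b ω))
      have hW'cond_int :
          Integrable (fun ω => W' ω * (P[A|MeasurableSpace.comap L inferInstance]) ω) P := by
        refine Integrable.bdd_mul (c := Cμ * ε⁻¹) integrable_condExp
          hW'meas.aestronglyMeasurable (ae_of_all _ fun ω => ?_)
        rw [Real.norm_eq_abs]; exact hW'b ω
      calc ∫ ω, (1 - A ω) * μ0 (L ω) * w0 (L ω) ∂P
          = ∫ ω, (W' ω - W' ω * A ω) ∂P := by
            refine integral_congr_ae (ae_of_all _ fun ω => ?_)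
            rw [hW'_def]; beta_reduce; ring
        _ = (∫ ω, W' ω ∂P) - ∫ ω, W' ω * A ω ∂P := integral_sub hW'_int hW'A_int
        _ = (∫ ω, W' ω ∂P)
              - ∫ ω, W' ω * (P[A|MeasurableSpace.comap L inferInstance]) ω ∂P := by
            rw [key_pull hm P hAint hW'sm hW'A_int]
        _ = ∫ ω, (W' ω - W' ω * (P[A|MeasurableSpace.comap L inferInstance]) ω) ∂P :=
            (integral_sub hW'_int hW'cond_int).symm
        _ = ∫ ω, μ0 (L ω) ∂P := by
            refine integral_congr_ae ?_
            filter_upwards [hπL, hππ'] with ω h1 h3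
            beta_reduce
            rw [h1, hW'_def]
            beta_reduce
            rw [← h3, hw0_def]
            beta_reduce
            have hne : (1 - π' (L ω)) ≠ 0 := ne_of_gt (h1π'pos (L ω))
            field_simp
    rw [← lhs, E0, rhs]
  -- conclude
  have hY1int : Integrable Y1 P := hintbdd hY1 C hY1b
  have hY0int : Integrable Y0 P := hintbdd hY0 C hY0b
  have hμ1int : Integrable (fun ω => μ1 (L ω)) P :=
    hintbdd (hμ1.comp hL) Cμ (ae_of_all _ fun ω => hμ1b (L ω))
  have hμ0int : Integrable (fun ω => μ0 (L ω)) P :=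
    hintbdd (hμ0.comp hL) Cμ (ae_of_all _ fun ω => hμ0b (L ω))
  rw [integral_sub hY1int hY0int, integral_sub hμ1int hμ0int, T1, T0]
end

section
/- Under consistency, no unmeasured confounding, and positivity, the average treatment effect is identified by inverse probability weighting: E[(A/π(L) − (1−A)/(1−π(L)))·Y] = E[Y¹ − Y⁰]. -/
open MeasureTheory ProbabilityTheory
open scoped NNReal ENNReal

lemma ipw_aux {Ω : Type*} {m' : MeasurableSpace Ω} {mf : MeasurableSpace Ω}
    [mΩ : MeasurableSpace Ω]
    (P : Measure Ω) [IsProbabilityMeasure P]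
    (hm' : m' ≤ mΩ)
    (B : Ω → ℝ) (hB : Measurable B) (hB01 : ∀ ω, B ω = 0 ∨ B ω = 1)
    (X : Ω → ℝ)
    (hmf : mf ≤ mΩ) (hXmf : StronglyMeasurable[mf] X)
    (hindep : ∀ S : Set Ω, MeasurableSet[mf] S →
      (P[(S ∩ B ⁻¹' {1}).indicator (fun _ => (1:ℝ)) | m'])
        =ᵐ[P] fun ω => (P[S.indicator (fun _ => (1:ℝ)) | m']) ω
          * (P[(B ⁻¹' {1}).indicator (fun _ => (1:ℝ)) | m']) ω)
    (ε : ℝ) (hε : 0 < ε)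
    (ρ : Ω → ℝ) (hρ : Measurable[m'] ρ)
    (hρver : ρ =ᵐ[P] P[B | m'])
    (hρbd : ∀ᵐ ω ∂P, ε ≤ ρ ω) :
    ∫ ω, (B ω / ρ ω) * X ω ∂P = ∫ ω, X ω ∂P := by
  have hρm : Measurable ρ := hρ.mono hm' le_rfl
  haveI : SigmaFinite (P.trim hm') := (isFiniteMeasure_trim hm').toSigmaFinite
  -- B = indicator of t
  set t : Set Ω := B ⁻¹' {1} with ht_def
  have hBt : B = t.indicator (fun _ => (1:ℝ)) := by
    funext ω
    rcases hB01 ω with h | h <;>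
      simp [Set.indicator_apply, ht_def, Set.mem_preimage, h]
  have htm : MeasurableSet t := hB (measurableSet_singleton 1)
  -- a.e. facts
  have hB01' : ∀ ω, 0 ≤ B ω ∧ B ω ≤ 1 := by
    intro ω; rcases hB01 ω with h | h <;> simp [h]
  have hBρ_bd : ∀ᵐ ω ∂P, |B ω / ρ ω| ≤ 1 / ε := by
    filter_upwards [hρbd] with ω hρω
    have h0 : 0 < ρ ω := lt_of_lt_of_le hε hρω
    rw [abs_div, abs_of_nonneg (hB01' ω).1, abs_of_pos h0]
    exact div_le_div₀ (by positivity) (hB01' ω).2 hε hρω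
  have hBρ_nonneg : ∀ᵐ ω ∂P, 0 ≤ B ω / ρ ω := by
    filter_upwards [hρbd] with ω hρω
    exact div_nonneg (hB01' ω).1 (le_of_lt (lt_of_lt_of_le hε hρω))
  have hBρ_meas : Measurable fun ω => B ω / ρ ω := hB.div hρm
  have hBρ_int : Integrable (fun ω => B ω / ρ ω) P :=
    (integrable_const (1/ε)).mono' hBρ_meas.aestronglyMeasurable
      (by filter_upwards [hBρ_bd] with ω h using by rwa [Real.norm_eq_abs])
  -- key: the reweighted measure agrees with P on mf
  have key : ∀ S : Set Ω, MeasurableSet[mf] S →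
      ∫ ω in S, B ω / ρ ω ∂P = (P S).toReal := by
    intro S hS
    have hSm : MeasurableSet S := hmf S hS
    -- rewrite as full-space integral of u * g
    set u : Ω → ℝ := fun ω => (ρ ω)⁻¹ with hu_def
    set g : Ω → ℝ := (S ∩ t).indicator (fun _ => (1:ℝ)) with hg_def
    have hug : (fun ω => (S.indicator (fun ω' => B ω' / ρ ω') ω)) = fun ω => u ω * g ω := by
      funext ω
      have hmem : ω ∈ t ↔ B ω = 1 := Iff.rfl
      rcases hB01 ω with h | h
      · have hωt : ω ∉ t := by simp [hmem, h]
        simp [hu_def, hg_def, Set.indicator_apply, hωt, h, Set.mem_inter_iff]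
      · have hωt : ω ∈ t := by simp [hmem, h]
        by_cases hωS : ω ∈ S
        · simp [hu_def, hg_def, Set.indicator_apply, hωS, hωt, h, div_eq_mul_inv, mul_comm]
        · simp [hu_def, hg_def, Set.indicator_apply, hωS]
    have hg_int : Integrable g P := (integrable_const (1:ℝ)).indicator (hSm.inter htm)
    have hug_int : Integrable (fun ω => u ω * g ω) P := by
      rw [← hug]
      exact hBρ_int.indicator hSm
    calc ∫ ω in S, B ω / ρ ω ∂P
        = ∫ ω, u ω * g ω ∂P := by
          rw [← integral_indicator hSm, hug]
      _ = ∫ ω, (P[fun ω => u ω * g ω | m']) ω ∂P := (integral_condExp hm').symm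
      _ = ∫ ω, (P[S.indicator (fun _ => (1:ℝ)) | m']) ω ∂P := by
          refine integral_congr_ae ?_
          have hpull : P[fun ω => u ω * g ω | m'] =ᵐ[P] fun ω => u ω * (P[g | m']) ω := by
            have := condExp_mul_of_stronglyMeasurable_left (μ := P) (m := m')
              (hρ.inv.stronglyMeasurable) (by exact hug_int)
              hg_int
            exact this
          have hρver' : (fun ω => (t.indicator (fun _ => (1:ℝ))) ω) =ᵐ[P] fun ω => B ω :=
            Filter.EventuallyEq.of_eq (by rw [hBt])
          have hgcond : P[g | m'] =ᵐ[P] fun ω =>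
              (P[S.indicator (fun _ => (1:ℝ)) | m']) ω * ρ ω := by
            refine (hindep S hS).trans ?_
            have : P[t.indicator (fun _ => (1:ℝ)) | m'] =ᵐ[P] ρ := by
              rw [← hBt]; exact hρver.symm
            filter_upwards [this] with ω hω
            rw [hω]
          filter_upwards [hpull, hgcond, hρbd] with ω h1 h2 h3
          have hρ0 : ρ ω ≠ 0 := ne_of_gt (lt_of_lt_of_le hε h3)
          rw [h1, h2, hu_def]
          field_simp
      _ = ∫ ω, S.indicator (fun _ => (1:ℝ)) ω ∂P := integral_condExp hm'
      _ = (P S).toReal := by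
          rw [integral_indicator_const (1:ℝ) hSm, smul_eq_mul, mul_one, Measure.real]
  -- the reweighted measure
  set w : Ω → ℝ≥0 := fun ω => Real.toNNReal (B ω / ρ ω) with hw_def
  have hw_meas : Measurable w := hBρ_meas.real_toNNReal
  set ν : Measure Ω := P.withDensity (fun ω => (w ω : ℝ≥0∞)) with hν_def
  have hν_eq : ∀ S : Set Ω, MeasurableSet[mf] S → ν S = P S := by
    intro S hS
    have hSm : MeasurableSet S := hmf S hS
    rw [hν_def, withDensity_apply _ hSm]
    have hcoe : ∀ ω, ((w ω : ℝ≥0∞)) = ENNReal.ofReal (B ω / ρ ω) := fun ω => rfl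
    calc ∫⁻ ω in S, (w ω : ℝ≥0∞) ∂P
        = ∫⁻ ω in S, ENNReal.ofReal (B ω / ρ ω) ∂P := by simp_rw [hcoe]
      _ = ENNReal.ofReal (∫ ω in S, B ω / ρ ω ∂P) := by
          rw [← ofReal_integral_eq_lintegral_ofReal (hBρ_int.restrict)
            (ae_restrict_of_ae hBρ_nonneg)]
      _ = ENNReal.ofReal ((P S).toReal) := by rw [key S hS]
      _ = P S := ENNReal.ofReal_toReal (measure_ne_top P S)
  haveI : IsProbabilityMeasure ν := by
    constructor
    rw [hν_eq Set.univ MeasurableSet.univ]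
    exact measure_univ
  have htrim : ν.trim hmf = P.trim hmf := by
    refine @Measure.ext Ω mf _ _ (fun S hS => ?_)
    rw [trim_measurableSet_eq hmf hS, trim_measurableSet_eq hmf hS, hν_eq S hS]
  have hXν : ∫ ω, X ω ∂ν = ∫ ω, X ω ∂P := by
    rw [integral_trim hmf hXmf (μ := ν), integral_trim hmf hXmf (μ := P), htrim]
  have hXw : ∫ ω, X ω ∂ν = ∫ ω, (B ω / ρ ω) * X ω ∂P := by
    rw [hν_def, integral_withDensity_eq_integral_smul hw_meas]
    refine integral_congr_ae ?_
    filter_upwards [hBρ_nonneg] with ω h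
    rw [NNReal.smul_def, smul_eq_mul, hw_def, Real.coe_toNNReal _ h]
  rw [← hXw, hXν]


/-- Under consistency, no unmeasured confounding, and positivity, the
average treatment effect is identified by inverse probability weighting:
`E[(A/π(L) − (1−A)/(1−π(L)))·Y] = E[Y¹ − Y⁰]`. -/
theorem ipw_identification
    {Ω : Type*} [MeasurableSpace Ω] [StandardBorelSpace Ω]
    (P : Measure Ω) [IsProbabilityMeasure P]
    {𝓛 : Type*} [MeasurableSpace 𝓛] [StandardBorelSpace 𝓛]
    (L : Ω → 𝓛) (hL : Measurable L)
    (A : Ω → ℝ) (hA : Measurable A) (hA01 : ∀ ω, A ω = 0 ∨ A ω = 1)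
    (Y Y0 Y1 : Ω → ℝ) (hY : Measurable Y) (hY0 : Measurable Y0) (hY1 : Measurable Y1)
    (C : ℝ) (hYb : ∀ᵐ ω ∂P, |Y ω| ≤ C) (hY0b : ∀ᵐ ω ∂P, |Y0 ω| ≤ C)
    (hY1b : ∀ᵐ ω ∂P, |Y1 ω| ≤ C)
    -- consistency
    (hcons : ∀ᵐ ω ∂P, Y ω = A ω * Y1 ω + (1 - A ω) * Y0 ω)
    -- no unmeasured confounding: (Y⁰, Y¹) ⫫ A ∣ σ(L)
    (hNUC : CondIndepFun (MeasurableSpace.comap L inferInstance) hL.comap_le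
      (fun ω => (Y0 ω, Y1 ω)) A P)
    -- positivity
    (ε : ℝ) (hε : ε ∈ Set.Ioo (0 : ℝ) (1 / 2))
    (π : 𝓛 → ℝ) (hπ : Measurable π)
    (hπver : (fun ω => π (L ω)) =ᵐ[P] P[A | MeasurableSpace.comap L inferInstance])
    (hπbd : ∀ᵐ ω ∂P, ε ≤ π (L ω) ∧ π (L ω) ≤ 1 - ε) :
    ∫ ω, (A ω / π (L ω) - (1 - A ω) / (1 - π (L ω))) * Y ω ∂P
      = ∫ ω, (Y1 ω - Y0 ω) ∂P := by
  have hε0 : (0:ℝ) < ε := hε.1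
  have hm' : MeasurableSpace.comap L inferInstance ≤ ‹MeasurableSpace Ω› := hL.comap_le
  have hf : Measurable (fun ω => (Y0 ω, Y1 ω)) := hY0.prodMk hY1
  have hmf : MeasurableSpace.comap (fun ω => (Y0 ω, Y1 ω)) inferInstance
      ≤ ‹MeasurableSpace Ω› := hf.comap_le
  have hf_mf : Measurable[MeasurableSpace.comap (fun ω => (Y0 ω, Y1 ω)) inferInstance]
      (fun ω => (Y0 ω, Y1 ω)) := Measurable.of_comap_le le_rfl
  have hY0mf : StronglyMeasurable[MeasurableSpace.comap (fun ω => (Y0 ω, Y1 ω)) inferInstance]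
      Y0 := (measurable_fst.comp hf_mf).stronglyMeasurable
  have hY1mf : StronglyMeasurable[MeasurableSpace.comap (fun ω => (Y0 ω, Y1 ω)) inferInstance]
      Y1 := (measurable_snd.comp hf_mf).stronglyMeasurable
  have hL_m' : Measurable[MeasurableSpace.comap L inferInstance] L :=
    Measurable.of_comap_le le_rfl
  have hπL : Measurable[MeasurableSpace.comap L inferInstance] (fun ω => π (L ω)) :=
    hπ.comp hL_m'
  -- unpack conditional independence into set-level product rule
  rw [condIndepFun_iff_condExp_inter_preimage_eq_mul hf hA] at hNUC
  -- integrability of A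
  have hA_bd : ∀ ω, 0 ≤ A ω ∧ A ω ≤ 1 := by
    intro ω; rcases hA01 ω with h | h <;> simp [h]
  have hA_int : Integrable A P :=
    (integrable_const (1:ℝ)).mono' hA.aestronglyMeasurable
      (ae_of_all _ fun ω => by
        rw [Real.norm_eq_abs, abs_of_nonneg (hA_bd ω).1]; exact (hA_bd ω).2)
  -- first application : B = A, X = Y1, ρ = π ∘ L
  have hI1 : ∫ ω, (A ω / π (L ω)) * Y1 ω ∂P = ∫ ω, Y1 ω ∂P := by
    refine ipw_aux P hm' A hA hA01 Y1 hmf hY1mf ?_ ε hε0 _ hπL hπver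
      (hπbd.mono fun ω h => h.1)
    intro S hS
    obtain ⟨s, hs, rfl⟩ := hS
    exact hNUC s {1} hs (measurableSet_singleton 1)
  -- second application : B = 1 - A, X = Y0, ρ = 1 - π ∘ L
  have hI2 : ∫ ω, ((1 - A ω) / (1 - π (L ω))) * Y0 ω ∂P = ∫ ω, Y0 ω ∂P := by
    have hB01 : ∀ ω, (1 - A ω) = 0 ∨ (1 - A ω) = 1 := by
      intro ω; rcases hA01 ω with h | h <;> simp [h]
    have hset : (fun ω => 1 - A ω) ⁻¹' {1} = A ⁻¹' {0} := by
      ext ω; simp [sub_eq_self]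
    have hρver : (fun ω => 1 - π (L ω)) =ᵐ[P] P[fun ω => 1 - A ω | MeasurableSpace.comap L inferInstance] := by
      have hsub : P[(fun _ => (1:ℝ)) - A | MeasurableSpace.comap L inferInstance] =ᵐ[P]
          P[fun _ => (1:ℝ) | MeasurableSpace.comap L inferInstance] - P[A | MeasurableSpace.comap L inferInstance] := condExp_sub (integrable_const 1) hA_int _
      have hconst : P[fun _ => (1:ℝ) | MeasurableSpace.comap L inferInstance] = fun _ => (1:ℝ) := condExp_const hm' 1
      have : P[fun ω => 1 - A ω | MeasurableSpace.comap L inferInstance] =ᵐ[P] fun ω => 1 - (P[A | MeasurableSpace.comap L inferInstance]) ω := by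
        refine (Filter.EventuallyEq.of_eq ?_).trans (hsub.trans ?_)
        · rfl
        · rw [hconst]; rfl
      filter_upwards [this, hπver] with ω h1 h2
      rw [h1, ← h2]
    refine ipw_aux P hm' (fun ω => 1 - A ω) (measurable_const.sub hA) hB01 Y0
      hmf hY0mf ?_ ε hε0 _ (measurable_const.sub hπL) hρver
      (hπbd.mono fun ω h => by linarith [h.2])
    intro S hS
    obtain ⟨s, hs, rfl⟩ := hS
    rw [hset]
    exact hNUC s {0} hs (measurableSet_singleton 0)
  -- integrability facts
  have hC : 0 ≤ C := by
    have h := hY1b.exists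
    obtain ⟨ω, hω⟩ := h
    exact le_trans (abs_nonneg _) hω
  have hquot_bd1 : ∀ᵐ ω ∂P, |A ω / π (L ω)| ≤ 1 / ε := by
    filter_upwards [hπbd] with ω h
    have h0 : 0 < π (L ω) := lt_of_lt_of_le hε0 h.1
    rw [abs_div, abs_of_nonneg (hA_bd ω).1, abs_of_pos h0]
    exact div_le_div₀ (by positivity) (hA_bd ω).2 hε0 h.1
  have hquot_bd2 : ∀ᵐ ω ∂P, |(1 - A ω) / (1 - π (L ω))| ≤ 1 / ε := by
    filter_upwards [hπbd] with ω h
    have h0 : 0 < 1 - π (L ω) := by linarith [h.2, hε.2]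
    rw [abs_div, abs_of_nonneg (by linarith [(hA_bd ω).2] : 0 ≤ 1 - A ω), abs_of_pos h0]
    exact div_le_div₀ (by positivity) (by linarith [(hA_bd ω).1]) hε0 (by linarith [h.2])
  have hint1 : Integrable (fun ω => (A ω / π (L ω)) * Y1 ω) P := by
    refine (integrable_const ((1/ε) * C)).mono'
      ((hA.div (hπ.comp hL)).mul hY1).aestronglyMeasurable ?_
    filter_upwards [hquot_bd1, hY1b] with ω h1 h2
    rw [Real.norm_eq_abs, abs_mul]
    exact mul_le_mul h1 h2 (abs_nonneg _) (by positivity)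
  have hint2 : Integrable (fun ω => ((1 - A ω) / (1 - π (L ω))) * Y0 ω) P := by
    refine (integrable_const ((1/ε) * C)).mono'
      (((measurable_const.sub hA).div (measurable_const.sub (hπ.comp hL))).mul
        hY0).aestronglyMeasurable ?_
    filter_upwards [hquot_bd2, hY0b] with ω h1 h2
    rw [Real.norm_eq_abs, abs_mul]
    exact mul_le_mul h1 h2 (abs_nonneg _) (by positivity)
  have hY1_int : Integrable Y1 P :=
    (integrable_const C).mono' hY1.aestronglyMeasurable
      (hY1b.mono fun ω h => by rwa [Real.norm_eq_abs])
  have hY0_int : Integrable Y0 P :=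
    (integrable_const C).mono' hY0.aestronglyMeasurable
      (hY0b.mono fun ω h => by rwa [Real.norm_eq_abs])
  -- rewrite the integrand using consistency
  have hcongr : (fun ω => (A ω / π (L ω) - (1 - A ω) / (1 - π (L ω))) * Y ω)
      =ᵐ[P] fun ω => (A ω / π (L ω)) * Y1 ω - ((1 - A ω) / (1 - π (L ω))) * Y0 ω := by
    filter_upwards [hcons] with ω hω
    rcases hA01 ω with h | h <;> rw [hω, h] <;> ring
  calc ∫ ω, (A ω / π (L ω) - (1 - A ω) / (1 - π (L ω))) * Y ω ∂P
      = ∫ ω, ((A ω / π (L ω)) * Y1 ω - ((1 - A ω) / (1 - π (L ω))) * Y0 ω) ∂P :=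
        integral_congr_ae hcongr
    _ = ∫ ω, (A ω / π (L ω)) * Y1 ω ∂P
          - ∫ ω, ((1 - A ω) / (1 - π (L ω))) * Y0 ω ∂P := integral_sub hint1 hint2
    _ = ∫ ω, Y1 ω ∂P - ∫ ω, Y0 ω ∂P := by rw [hI1, hI2]
    _ = ∫ ω, (Y1 ω - Y0 ω) ∂P := (integral_sub hY1_int hY0_int).symm
end

section
/- Under consistency, no unmeasured confounding, and positivity, the outcome regression recovers the conditional mean counterfactual outcomes: μ(1,L) is a version of E[Y¹ | σ(L)] and μ(0,L) is a version of E[Y⁰ | σ(L)]. -/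
open MeasureTheory ProbabilityTheory Filter
open MeasureTheory ProbabilityTheory Filter

lemma integrable_of_ae_bdd {Ω : Type*} {mΩ : MeasurableSpace Ω}
    (μ : Measure Ω) [IsFiniteMeasure μ] {f : Ω → ℝ} (hf : AEStronglyMeasurable f μ) {c : ℝ}
    (hb : ∀ᵐ ω ∂μ, |f ω| ≤ c) : Integrable f μ :=
  ⟨hf, HasFiniteIntegral.of_bounded (C := c) (by simpa [Real.norm_eq_abs] using hb)⟩

lemma pullout_integral {Ω : Type*} {m : MeasurableSpace Ω} {mΩ : MeasurableSpace Ω}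
    (hm : m ≤ mΩ) (μ : Measure Ω) [IsProbabilityMeasure μ] (W X : Ω → ℝ)
    (hW : StronglyMeasurable[m] W)
    {cW : ℝ} (hWb : ∀ᵐ ω ∂μ, |W ω| ≤ cW)
    (hX : AEStronglyMeasurable X μ) {cX : ℝ} (hXb : ∀ᵐ ω ∂μ, |X ω| ≤ cX) :
    ∫ ω, W ω * X ω ∂μ = ∫ ω, W ω * (μ[X|m]) ω ∂μ := by
  have hXi : Integrable X μ := integrable_of_ae_bdd μ hX hXb
  have hWX : Integrable (W * X) μ := by
    refine integrable_of_ae_bdd μ ((hW.mono hm).aestronglyMeasurable.mul hX) (c := cW * cX) ?_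
    filter_upwards [hWb, hXb] with ω h1 h2
    calc |(W * X) ω| = |W ω| * |X ω| := abs_mul _ _
      _ ≤ cW * cX := mul_le_mul h1 h2 (abs_nonneg _) ((abs_nonneg _).trans h1)
  have h := condExp_mul_of_stronglyMeasurable_left (μ := μ) hW hWX hXi
  calc ∫ ω, W ω * X ω ∂μ = ∫ ω, (μ[W * X|m]) ω ∂μ := (integral_condExp hm).symm
    _ = ∫ ω, (W * μ[X|m]) ω ∂μ := integral_congr_ae h
    _ = ∫ ω, W ω * (μ[X|m]) ω ∂μ := rfl

lemma condProb_abs_le_one {Ω : Type*} {m : MeasurableSpace Ω} {mΩ : MeasurableSpace Ω}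
    (hm : m ≤ mΩ) (μ : Measure Ω) [IsProbabilityMeasure μ] {T : Set Ω} (hT : MeasurableSet T) :
    ∀ᵐ ω ∂μ, |(μ⟦T|m⟧) ω| ≤ 1 := by
  have hi : Integrable (T.indicator fun _ => (1 : ℝ)) μ :=
    integrable_of_ae_bdd μ (measurable_const.indicator hT).aestronglyMeasurable (c := 1)
      (Eventually.of_forall fun ω => by
        by_cases hω : ω ∈ T <;> simp [Set.indicator_of_mem, Set.indicator_of_notMem, hω])
  have h0 : (0 : Ω → ℝ) ≤ᵐ[μ] μ⟦T|m⟧ :=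
    condExp_nonneg (Eventually.of_forall fun ω => Set.indicator_nonneg (fun _ _ => zero_le_one) ω)
  have h1 : μ⟦T|m⟧ ≤ᵐ[μ] μ[(fun _ => (1 : ℝ))|m] := by
    refine condExp_mono hi (integrable_const 1) (Eventually.of_forall fun ω => ?_)
    by_cases hω : ω ∈ T <;> simp [Set.indicator_of_mem, Set.indicator_of_notMem, hω]
  rw [condExp_const hm] at h1
  filter_upwards [h0, h1] with ω ha hb
  rw [abs_le]
  exact ⟨le_trans (by norm_num) (ha : (0:ℝ) ≤ _), hb⟩

lemma key_product {Ω : Type*} {m : MeasurableSpace Ω} {mΩ : MeasurableSpace Ω}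
    (hm : m ≤ mΩ) (μ : Measure Ω) [IsProbabilityMeasure μ]
    {T : Set Ω} (hT : MeasurableSet T)
    {X : Ω → ℝ} (hX : Measurable X) {cX : ℝ} (hXb : ∀ ω, |X ω| ≤ cX)
    (h : ∀ u : Set ℝ, MeasurableSet u →
      (μ⟦X ⁻¹' u ∩ T|m⟧) =ᵐ[μ] fun ω => (μ⟦X ⁻¹' u|m⟧) ω * (μ⟦T|m⟧) ω)
    {W : Ω → ℝ} (hW : StronglyMeasurable[m] W) {cW : ℝ} (hWb : ∀ᵐ ω ∂μ, |W ω| ≤ cW) :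
    ∫ ω, W ω * (T.indicator (fun _ => (1:ℝ)) ω * X ω) ∂μ
      = ∫ ω, (W ω * (μ⟦T|m⟧) ω) * X ω ∂μ := by
  classical
  set CT : Ω → ℝ := μ⟦T|m⟧ with hCTdef
  have hCTsm : StronglyMeasurable[m] CT := stronglyMeasurable_condExp
  have hCTb : ∀ᵐ ω ∂μ, |CT ω| ≤ 1 := condProb_abs_le_one hm μ hT
  have hWaesm : AEStronglyMeasurable W μ := (hW.mono hm).aestronglyMeasurable
  have hWCTb : ∀ᵐ ω ∂μ, |W ω * CT ω| ≤ cW := by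
    filter_upwards [hWb, hCTb] with ω h1 h2
    calc |W ω * CT ω| = |W ω| * |CT ω| := abs_mul _ _
      _ ≤ cW * 1 := mul_le_mul h1 h2 (abs_nonneg _) ((abs_nonneg _).trans h1)
      _ = cW := mul_one _
  have hWCTsm : StronglyMeasurable[m] (fun ω => W ω * CT ω) := hW.mul hCTsm
  have hTindb : ∀ (S : Set Ω) (ω : Ω), |S.indicator (fun _ => (1:ℝ)) ω| ≤ 1 := by
    intro S ω; by_cases hω : ω ∈ S <;>
      simp [Set.indicator_of_mem, Set.indicator_of_notMem, hω]
  -- σ-algebra generated by X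
  set mX : MeasurableSpace Ω := MeasurableSpace.comap X inferInstance with hmXdef
  have hmXle : mX ≤ mΩ := hX.comap_le
  have hXmX : Measurable[mX] X := Measurable.of_comap_le le_rfl
  set c : ℝ := max cX 0 with hcdef
  have hXc : ∀ ω, X ω ∈ Set.Icc (-c) c := by
    intro ω
    have h1 : |X ω| ≤ c := (hXb ω).trans (le_max_left _ _)
    have := abs_le.mp h1
    exact ⟨this.1, this.2⟩
  have h0c : (0:ℝ) ∈ Set.Icc (-c) c :=
    ⟨neg_nonpos.mpr (le_max_right _ _), le_max_right _ _⟩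
  -- the property, proved for all mX-simple functions
  have hsimple : ∀ f : @SimpleFunc Ω mX ℝ,
      ∫ ω, W ω * (T.indicator (fun _ => (1:ℝ)) ω * f ω) ∂μ
        = ∫ ω, (W ω * CT ω) * f ω ∂μ := by
    intro f
    induction f using SimpleFunc.induction with
    | const a hs =>
      rename_i s
      obtain ⟨u, hu, hsu⟩ := id hs
      have hv : MeasurableSet[mΩ] s := by rw [← hsu]; exact hX hu
      have hvT : MeasurableSet[mΩ] (s ∩ T) := hv.inter hT
      have hcoe : ∀ ω : Ω, (⇑(SimpleFunc.piecewise s hs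
          (SimpleFunc.const Ω a) (SimpleFunc.const Ω 0)) : Ω → ℝ) ω
          = s.indicator (fun _ => a) ω := by
        intro ω; by_cases hω : ω ∈ s <;>
          simp [SimpleFunc.piecewise_apply, Set.indicator, hω]
      have hcond : (μ⟦s ∩ T|m⟧) =ᵐ[μ] fun ω => (μ⟦s|m⟧) ω * CT ω := by
        have := h u hu; rwa [hsu] at this
      have hindm : ∀ {S : Set Ω}, MeasurableSet[mΩ] S →
          AEStronglyMeasurable[mΩ] (S.indicator fun _ => (1:ℝ)) μ := fun hS =>
        Measurable.aestronglyMeasurable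
          ((measurable_const : Measurable[mΩ] fun _ : Ω => (1:ℝ)).indicator hS)
      calc ∫ ω, W ω * (T.indicator (fun _ => (1:ℝ)) ω *
              (⇑(SimpleFunc.piecewise s hs
                (SimpleFunc.const Ω a) (SimpleFunc.const Ω 0)) : Ω → ℝ) ω) ∂μ
          = ∫ ω, a * (W ω * (s ∩ T).indicator (fun _ => (1:ℝ)) ω) ∂μ := by
            refine integral_congr_ae (Eventually.of_forall fun ω => ?_)
            simp only [hcoe]
            by_cases h1 : ω ∈ T <;> by_cases h2 : ω ∈ s <;>
              simp [Set.indicator, h1, h2, Set.mem_inter_iff] <;> ring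
        _ = a * ∫ ω, W ω * (s ∩ T).indicator (fun _ => (1:ℝ)) ω ∂μ :=
            integral_const_mul a _
        _ = a * ∫ ω, W ω * (μ⟦s ∩ T|m⟧) ω ∂μ := by
            rw [pullout_integral hm μ _ _ hW hWb (hindm hvT)
              (Eventually.of_forall (hTindb _))]
        _ = a * ∫ ω, (W ω * CT ω) * (μ⟦s|m⟧) ω ∂μ := by
            congr 1
            refine integral_congr_ae ?_
            filter_upwards [hcond] with ω hω
            rw [hω]; ring
        _ = a * ∫ ω, (W ω * CT ω) * s.indicator (fun _ => (1:ℝ)) ω ∂μ := by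
            rw [← pullout_integral hm μ _ _ hWCTsm hWCTb (hindm hv)
              (Eventually.of_forall (hTindb _))]
        _ = ∫ ω, (W ω * CT ω) *
              (⇑(SimpleFunc.piecewise s hs
                (SimpleFunc.const Ω a) (SimpleFunc.const Ω 0)) : Ω → ℝ) ω ∂μ := by
            rw [← integral_const_mul]
            refine integral_congr_ae (Eventually.of_forall fun ω => ?_)
            simp only [hcoe]
            by_cases h2 : ω ∈ s <;> simp [Set.indicator, h2] <;> ring
    | add hdisj hPf hPg =>
      rename_i f g
      obtain ⟨bf, hbf⟩ : ∃ b, ∀ ω, |f ω| ≤ b := by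
        obtain ⟨b, hb⟩ := (f.map (fun x => |x|)).exists_forall_le
        exact ⟨b, fun ω => by simpa using hb ω⟩
      obtain ⟨bg, hbg⟩ : ∃ b, ∀ ω, |g ω| ≤ b := by
        obtain ⟨b, hb⟩ := (g.map (fun x => |x|)).exists_forall_le
        exact ⟨b, fun ω => by simpa using hb ω⟩
      have hfm : AEStronglyMeasurable[mΩ] (⇑f) μ :=
        ((f.measurable).mono hmXle le_rfl).aestronglyMeasurable
      have hgm : AEStronglyMeasurable[mΩ] (⇑g) μ :=
        ((g.measurable).mono hmXle le_rfl).aestronglyMeasurable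
      have key : ∀ (V : Ω → ℝ), AEStronglyMeasurable[mΩ] V μ → (∀ᵐ ω ∂μ, |V ω| ≤ cW) →
          ∀ (q : Ω → ℝ), AEStronglyMeasurable[mΩ] q μ → (∀ ω, |q ω| ≤ 1) →
          ∀ (p : Ω → ℝ), AEStronglyMeasurable[mΩ] p μ → (∀ ω, |p ω| ≤ bf + bg) →
          Integrable (fun ω => V ω * (q ω * p ω)) μ := by
        intro V hV hVb q hq hqb p hp hpb
        refine integrable_of_ae_bdd μ (hV.mul (hq.mul hp)) (c := cW * (1 * (bf + bg))) ?_
        filter_upwards [hVb] with ω h1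
        have h2 : |q ω * p ω| ≤ 1 * (bf + bg) :=
          (abs_mul _ _).le.trans (mul_le_mul (hqb ω) (hpb ω) (abs_nonneg _)
            ((abs_nonneg _).trans (hqb ω)))
        calc |V ω * (q ω * p ω)| = |V ω| * |q ω * p ω| := abs_mul _ _
          _ ≤ cW * (1 * (bf + bg)) := mul_le_mul h1 h2 (abs_nonneg _) ((abs_nonneg _).trans h1)
      have hbf' : ∀ ω, |f ω| ≤ bf + bg := fun ω =>
        (hbf ω).trans (le_add_of_nonneg_right ((abs_nonneg _).trans (hbg ω)))
      have hbg' : ∀ ω, |g ω| ≤ bf + bg := fun ω =>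
        (hbg ω).trans (le_add_of_nonneg_left ((abs_nonneg _).trans (hbf ω)))
      have I1 := key W hWaesm hWb _ (measurable_const.indicator hT).aestronglyMeasurable
        (hTindb T) _ hfm hbf'
      have I2 := key W hWaesm hWb _ (measurable_const.indicator hT).aestronglyMeasurable
        (hTindb T) _ hgm hbg'
      have J1 := key _ (hWCTsm.mono hm).aestronglyMeasurable hWCTb
        (fun _ => (1:ℝ)) aestronglyMeasurable_const (fun ω => by norm_num) _ hfm hbf'
      have J2 := key _ (hWCTsm.mono hm).aestronglyMeasurable hWCTb
        (fun _ => (1:ℝ)) aestronglyMeasurable_const (fun ω => by norm_num) _ hgm hbg'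
      calc ∫ ω, W ω * (T.indicator (fun _ => (1:ℝ)) ω * (⇑(f + g)) ω) ∂μ
          = ∫ ω, (W ω * (T.indicator (fun _ => (1:ℝ)) ω * f ω)
              + W ω * (T.indicator (fun _ => (1:ℝ)) ω * g ω)) ∂μ := by
            refine integral_congr_ae (Eventually.of_forall fun ω => ?_)
            simp only [SimpleFunc.coe_add, Pi.add_apply]; ring
        _ = (∫ ω, W ω * (T.indicator (fun _ => (1:ℝ)) ω * f ω) ∂μ)
            + ∫ ω, W ω * (T.indicator (fun _ => (1:ℝ)) ω * g ω) ∂μ := integral_add I1 I2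
        _ = (∫ ω, (W ω * CT ω) * f ω ∂μ) + ∫ ω, (W ω * CT ω) * g ω ∂μ := by rw [hPf, hPg]
        _ = ∫ ω, ((W ω * CT ω) * f ω + (W ω * CT ω) * g ω) ∂μ := by
            refine (integral_add ?_ ?_).symm
            · exact (J1.congr (Eventually.of_forall fun ω => by ring))
            · exact (J2.congr (Eventually.of_forall fun ω => by ring))
        _ = ∫ ω, (W ω * CT ω) * (⇑(f + g)) ω ∂μ := by
            refine integral_congr_ae (Eventually.of_forall fun ω => ?_)
            simp only [SimpleFunc.coe_add, Pi.add_apply]; ring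
  -- approximation and limit
  set φ : ℕ → @SimpleFunc Ω mX ℝ :=
    fun n => @SimpleFunc.approxOn ℝ Ω _ _ _ mX X hXmX (Set.Icc (-c) c) 0 h0c _ n with hφdef
  have hφmem : ∀ n ω, φ n ω ∈ Set.Icc (-c) c := fun n ω =>
    SimpleFunc.approxOn_mem hXmX h0c n ω
  have hφb : ∀ n ω, |φ n ω| ≤ c := fun n ω => abs_le.mpr ⟨(hφmem n ω).1, (hφmem n ω).2⟩
  have hφt : ∀ ω, Tendsto (fun n => φ n ω) atTop (nhds (X ω)) := fun ω =>
    SimpleFunc.tendsto_approxOn hXmX h0c (subset_closure (hXc ω))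
  have hφm : ∀ n, AEStronglyMeasurable[mΩ] (⇑(φ n)) μ := fun n =>
    (((φ n).measurable).mono hmXle le_rfl).aestronglyMeasurable
  have hbd1 : ∀ n, ∀ᵐ ω ∂μ, ‖W ω * (T.indicator (fun _ => (1:ℝ)) ω * φ n ω)‖ ≤ cW * c := by
    intro n
    filter_upwards [hWb] with ω h1
    rw [Real.norm_eq_abs]
    have h2 : |T.indicator (fun _ => (1:ℝ)) ω * φ n ω| ≤ 1 * c :=
      (abs_mul _ _).le.trans (mul_le_mul (hTindb T ω) (hφb n ω) (abs_nonneg _)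
        ((abs_nonneg _).trans (hTindb T ω)))
    calc |W ω * (T.indicator (fun _ => (1:ℝ)) ω * φ n ω)|
        = |W ω| * |T.indicator (fun _ => (1:ℝ)) ω * φ n ω| := abs_mul _ _
      _ ≤ cW * (1 * c) := mul_le_mul h1 h2 (abs_nonneg _) ((abs_nonneg _).trans h1)
      _ = cW * c := by ring
  have hbd2 : ∀ n, ∀ᵐ ω ∂μ, ‖(W ω * CT ω) * φ n ω‖ ≤ cW * c := by
    intro n
    filter_upwards [hWCTb] with ω h1
    rw [Real.norm_eq_abs]
    calc |(W ω * CT ω) * φ n ω| = |W ω * CT ω| * |φ n ω| := abs_mul _ _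
      _ ≤ cW * c := mul_le_mul h1 (hφb n ω) (abs_nonneg _) ((abs_nonneg _).trans h1)
  have hL : Tendsto (fun n => ∫ ω, W ω * (T.indicator (fun _ => (1:ℝ)) ω * φ n ω) ∂μ) atTop
      (nhds (∫ ω, W ω * (T.indicator (fun _ => (1:ℝ)) ω * X ω) ∂μ)) := by
    refine tendsto_integral_of_dominated_convergence (fun _ => cW * c)
      (fun n => hWaesm.mul ((measurable_const.indicator hT).aestronglyMeasurable.mul (hφm n)))
      (integrable_const _) hbd1 ?_
    exact Eventually.of_forall fun ω =>
      ((hφt ω).const_mul (T.indicator (fun _ => (1:ℝ)) ω)).const_mul (W ω)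
  have hR : Tendsto (fun n => ∫ ω, (W ω * CT ω) * φ n ω ∂μ) atTop
      (nhds (∫ ω, (W ω * CT ω) * X ω ∂μ)) := by
    refine tendsto_integral_of_dominated_convergence (fun _ => cW * c)
      (fun n => ((hWCTsm.mono hm).aestronglyMeasurable).mul (hφm n))
      (integrable_const _) hbd2 ?_
    exact Eventually.of_forall fun ω => (hφt ω).const_mul (W ω * CT ω)
  exact tendsto_nhds_unique (hL.congr fun n => hsimple (φ n)) hR

lemma aux_recover {Ω : Type*} [mΩ : MeasurableSpace Ω] [StandardBorelSpace Ω]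
    (μ : Measure Ω) [IsProbabilityMeasure μ]
    {𝓛 : Type*} [m𝓛 : MeasurableSpace 𝓛]
    (L : Ω → 𝓛) (hL : Measurable L)
    (A' : Ω → ℝ) (hA' : Measurable A') (hA01 : ∀ ω, A' ω = 0 ∨ A' ω = 1)
    (Y X : Ω → ℝ) (hX : Measurable X) (cX : ℝ) (hXb : ∀ ω, |X ω| ≤ cX)
    (hcons : ∀ᵐ ω ∂μ, A' ω * Y ω = A' ω * X ω)
    (hCI : CondIndepFun (MeasurableSpace.comap L inferInstance) hL.comap_le X A' μ)
    (ε : ℝ) (hε : 0 < ε)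
    (π' : 𝓛 → ℝ) (hπ' : Measurable π')
    (hπv : (fun ω => π' (L ω)) =ᵐ[μ] μ[A' | MeasurableSpace.comap L inferInstance])
    (hπbd : ∀ᵐ ω ∂μ, ε ≤ π' (L ω) ∧ π' (L ω) ≤ 1)
    (μc : 𝓛 → ℝ) (hμc : Measurable μc) (Cμ : ℝ) (hμcb : ∀ ℓ, |μc ℓ| ≤ Cμ)
    (hreg : ∀ g : 𝓛 → ℝ, Measurable g → (∃ Cg, ∀ ℓ, |g ℓ| ≤ Cg) →
      ∫ ω, A' ω * Y ω * g (L ω) ∂μ = ∫ ω, A' ω * μc (L ω) * g (L ω) ∂μ) :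
    (fun ω => μc (L ω)) =ᵐ[μ] μ[X | MeasurableSpace.comap L inferInstance] := by
  have hm : MeasurableSpace.comap L m𝓛 ≤ mΩ := hL.comap_le
  have hLm : Measurable[MeasurableSpace.comap L m𝓛] L := fun s hs => ⟨s, hs, rfl⟩
  have hXi : Integrable X μ :=
    integrable_of_ae_bdd μ hX.aestronglyMeasurable (Eventually.of_forall hXb)
  -- the treatment indicator set
  set T : Set Ω := A' ⁻¹' {1} with hTdef
  have hT : MeasurableSet[mΩ] T := hA' (measurableSet_singleton 1)
  have hA'ind : ∀ ω, A' ω = T.indicator (fun _ => (1:ℝ)) ω := by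
    intro ω
    rcases hA01 ω with h | h
    · have hω : ω ∉ T := by simp [hTdef, Set.mem_preimage, h]
      simp [Set.indicator_of_notMem hω, h]
    · have hω : ω ∈ T := by simp [hTdef, Set.mem_preimage, h]
      simp [Set.indicator_of_mem hω, h]
  have hA'b : ∀ ω, |A' ω| ≤ 1 := by
    intro ω; rcases hA01 ω with h | h <;> simp [h]
  have hCT : (μ⟦T|MeasurableSpace.comap L m𝓛⟧) =ᵐ[μ] μ[A'|MeasurableSpace.comap L m𝓛] :=
    condExp_congr_ae (Eventually.of_forall fun ω => (hA'ind ω).symm)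
  -- clamped propensity
  obtain ⟨ω₀, hω₀⟩ := hπbd.exists
  have hε1 : ε ≤ 1 := hω₀.1.trans hω₀.2
  set π'' : 𝓛 → ℝ := fun ℓ => max ε (min 1 (π' ℓ)) with hπ''def
  have hπ''m : Measurable π'' := measurable_const.max (measurable_const.min hπ')
  have hπ''lb : ∀ ℓ, ε ≤ π'' ℓ := fun ℓ => le_max_left _ _
  have hπ''ub : ∀ ℓ, π'' ℓ ≤ 1 := fun ℓ => max_le hε1 (min_le_left _ _)
  have hπ''pos : ∀ ℓ, π'' ℓ ≠ 0 := fun ℓ => (lt_of_lt_of_le hε (hπ''lb ℓ)).ne'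
  have hπ''eq : ∀ᵐ ω ∂μ, π'' (L ω) = π' (L ω) := by
    filter_upwards [hπbd] with ω hω
    rw [hπ''def]
    simp only
    rw [min_eq_right hω.2, max_eq_right hω.1]
  -- main argument
  refine ae_eq_condExp_of_forall_setIntegral_eq hm hXi
    (fun s _ _ => (integrable_of_ae_bdd μ ((hμc.comp hL).aestronglyMeasurable)
      (Eventually.of_forall fun ω => hμcb (L ω))).integrableOn)
    (fun s hs _ => ?_)
    (StronglyMeasurable.aestronglyMeasurable ((hμc.comp hLm).stronglyMeasurable))
  obtain ⟨B, hB, rfl⟩ := hs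
  -- test function
  set g : 𝓛 → ℝ := fun ℓ => B.indicator (fun _ => (1:ℝ)) ℓ / π'' ℓ with hgdef
  have hgm : Measurable g := (measurable_const.indicator hB).div hπ''m
  have hindb : ∀ (S : Set 𝓛) (ℓ : 𝓛), |S.indicator (fun _ => (1:ℝ)) ℓ| ≤ 1 := by
    intro S ℓ; by_cases hℓ : ℓ ∈ S <;>
      simp [Set.indicator_of_mem, Set.indicator_of_notMem, hℓ]
  have hgb : ∀ ℓ, |g ℓ| ≤ 1 / ε := by
    intro ℓ
    rw [hgdef]
    simp only
    rw [abs_div, abs_of_pos (lt_of_lt_of_le hε (hπ''lb ℓ))]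
    exact div_le_div₀ zero_le_one (hindb B ℓ) hε (hπ''lb ℓ)
  have hgπ : ∀ ℓ, π'' ℓ * g ℓ = B.indicator (fun _ => (1:ℝ)) ℓ := by
    intro ℓ
    rw [hgdef]
    simp only
    rw [mul_div_cancel₀ _ (hπ''pos ℓ)]
  -- conditional independence at T
  have hCIiff := (condIndepFun_iff_condExp_inter_preimage_eq_mul
      (μ := μ) (hm' := hL.comap_le) hX hA').mp hCI
  have hcondT : ∀ u : Set ℝ, MeasurableSet u →
      (μ⟦X ⁻¹' u ∩ T|MeasurableSpace.comap L m𝓛⟧) =ᵐ[μ] fun ω => (μ⟦X ⁻¹' u|MeasurableSpace.comap L m𝓛⟧) ω * (μ⟦T|MeasurableSpace.comap L m𝓛⟧) ω :=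
    fun u hu => hCIiff u {1} hu (measurableSet_singleton 1)
  -- bounds and measurability of weights
  have hW1sm : StronglyMeasurable[MeasurableSpace.comap L m𝓛] (fun ω => g (L ω) * μc (L ω)) :=
    ((hgm.comp hLm).mul (hμc.comp hLm)).stronglyMeasurable
  have hW1b : ∀ᵐ ω ∂μ, |g (L ω) * μc (L ω)| ≤ (1/ε) * Cμ := by
    refine Eventually.of_forall fun ω => ?_
    calc |g (L ω) * μc (L ω)| = |g (L ω)| * |μc (L ω)| := abs_mul _ _
      _ ≤ (1/ε) * Cμ := mul_le_mul (hgb (L ω)) (hμcb (L ω)) (abs_nonneg _)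
          ((abs_nonneg (g (L ω))).trans (hgb (L ω)))
  have hgLsm : StronglyMeasurable[MeasurableSpace.comap L m𝓛] (fun ω => g (L ω)) :=
    (hgm.comp hLm).stronglyMeasurable
  have hgLb : ∀ᵐ ω ∂μ, |g (L ω)| ≤ 1/ε := Eventually.of_forall fun ω => hgb (L ω)
  have hCTb : ∀ᵐ ω ∂μ, |(μ⟦T|MeasurableSpace.comap L m𝓛⟧) ω| ≤ 1 := condProb_abs_le_one hm μ hT
  have hW2sm : StronglyMeasurable[MeasurableSpace.comap L m𝓛] (fun ω => g (L ω) * (μ⟦T|MeasurableSpace.comap L m𝓛⟧) ω) :=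
    hgLsm.mul stronglyMeasurable_condExp
  have hW2b : ∀ᵐ ω ∂μ, |g (L ω) * (μ⟦T|MeasurableSpace.comap L m𝓛⟧) ω| ≤ (1/ε) * 1 := by
    filter_upwards [hCTb] with ω h1
    calc |g (L ω) * (μ⟦T|MeasurableSpace.comap L m𝓛⟧) ω| = |g (L ω)| * |(μ⟦T|MeasurableSpace.comap L m𝓛⟧) ω| := abs_mul _ _
      _ ≤ (1/ε) * 1 := mul_le_mul (hgb (L ω)) h1 (abs_nonneg _)
          ((abs_nonneg (g (L ω))).trans (hgb (L ω)))
  -- chain of equalities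
  calc ∫ ω in L ⁻¹' B, μc (L ω) ∂μ
      = ∫ ω, B.indicator (fun _ => (1:ℝ)) (L ω) * μc (L ω) ∂μ := by
        rw [← integral_indicator (hL hB)]
        refine integral_congr_ae (Eventually.of_forall fun ω => ?_)
        by_cases hω : L ω ∈ B <;>
          simp [Set.indicator, hω]
    _ = ∫ ω, (μ[A'|MeasurableSpace.comap L m𝓛]) ω * (g (L ω) * μc (L ω)) ∂μ := by
        refine integral_congr_ae ?_
        filter_upwards [hπ''eq, hπv] with ω h1 h2
        rw [← hgπ (L ω), h1, (by exact h2.symm : (μ[A'|MeasurableSpace.comap L m𝓛]) ω = π' (L ω))]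
        ring
    _ = ∫ ω, (fun ω => g (L ω) * μc (L ω)) ω * A' ω ∂μ := by
        rw [pullout_integral hm μ _ A' hW1sm hW1b hA'.aestronglyMeasurable
          (Eventually.of_forall hA'b)]
        refine integral_congr_ae (Eventually.of_forall fun ω => ?_)
        ring
    _ = ∫ ω, A' ω * μc (L ω) * g (L ω) ∂μ := by
        refine integral_congr_ae (Eventually.of_forall fun ω => ?_)
        simp only
        ring
    _ = ∫ ω, A' ω * Y ω * g (L ω) ∂μ := (hreg g hgm ⟨1/ε, hgb⟩).symm
    _ = ∫ ω, g (L ω) * (T.indicator (fun _ => (1:ℝ)) ω * X ω) ∂μ := by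
        refine integral_congr_ae ?_
        filter_upwards [hcons] with ω h1
        rw [← hA'ind ω]
        calc A' ω * Y ω * g (L ω) = A' ω * X ω * g (L ω) := by rw [h1]
          _ = g (L ω) * (A' ω * X ω) := by ring
    _ = ∫ ω, (g (L ω) * (μ⟦T|MeasurableSpace.comap L m𝓛⟧) ω) * X ω ∂μ :=
        key_product hm μ hT hX hXb hcondT hgLsm hgLb
    _ = ∫ ω, (g (L ω) * (μ⟦T|MeasurableSpace.comap L m𝓛⟧) ω) * (μ[X|MeasurableSpace.comap L m𝓛]) ω ∂μ :=
        pullout_integral hm μ _ X hW2sm hW2b hX.aestronglyMeasurable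
          (Eventually.of_forall hXb)
    _ = ∫ ω, (L ⁻¹' B).indicator (fun ω => (μ[X|MeasurableSpace.comap L m𝓛]) ω) ω ∂μ := by
        refine integral_congr_ae ?_
        filter_upwards [hCT, hπv, hπ''eq] with ω h1 h2 h3
        have h2' : π' (L ω) = (μ[A'|MeasurableSpace.comap L m𝓛]) ω := h2
        rw [(by exact h1 : (μ⟦T|MeasurableSpace.comap L m𝓛⟧) ω = (μ[A'|MeasurableSpace.comap L m𝓛]) ω),
          ← h2', ← h3]
        by_cases hω : L ω ∈ B
        · have hω' : ω ∈ L ⁻¹' B := hω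
          rw [Set.indicator_of_mem hω']
          have ho : g (L ω) * π'' (L ω) = 1 := by
            rw [mul_comm, hgπ (L ω)]; exact Set.indicator_of_mem hω _
          rw [ho]; ring
        · have hω' : ω ∉ L ⁻¹' B := hω
          rw [Set.indicator_of_notMem hω']
          have hz : g (L ω) * π'' (L ω) = 0 := by
            rw [mul_comm, hgπ (L ω)]; exact Set.indicator_of_notMem hω _
          rw [hz]; ring
    _ = ∫ ω in L ⁻¹' B, (μ[X|MeasurableSpace.comap L m𝓛]) ω ∂μ := integral_indicator (hL hB)
    _ = ∫ ω in L ⁻¹' B, X ω ∂μ := setIntegral_condExp hm hXi ⟨B, hB, rfl⟩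

/-- Under consistency, no unmeasured confounding, and positivity, the
outcome regression recovers the conditional mean counterfactual outcomes:
`μ(1,L)` is a version of `E[Y¹ | σ(L)]` and `μ(0,L)` is a version of `E[Y⁰ | σ(L)]`. -/
theorem outcome_regression_recovers_counterfactual_means
    {Ω : Type*} [MeasurableSpace Ω] [StandardBorelSpace Ω]
    (P : Measure Ω) [IsProbabilityMeasure P]
    {𝓛 : Type*} [MeasurableSpace 𝓛] [StandardBorelSpace 𝓛]
    (L : Ω → 𝓛) (hL : Measurable L)
    (A : Ω → ℝ) (hA : Measurable A) (hA01 : ∀ ω, A ω = 0 ∨ A ω = 1)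
    (Y Y0 Y1 : Ω → ℝ) (hY : Measurable Y) (hY0 : Measurable Y0) (hY1 : Measurable Y1)
    (C : ℝ) (hYb : ∀ᵐ ω ∂P, |Y ω| ≤ C) (hY0b : ∀ᵐ ω ∂P, |Y0 ω| ≤ C)
    (hY1b : ∀ᵐ ω ∂P, |Y1 ω| ≤ C)
    -- consistency
    (hcons : ∀ᵐ ω ∂P, Y ω = A ω * Y1 ω + (1 - A ω) * Y0 ω)
    -- no unmeasured confounding: (Y⁰, Y¹) ⫫ A ∣ σ(L)
    (hNUC : CondIndepFun (MeasurableSpace.comap L inferInstance) hL.comap_le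
      (fun ω => (Y0 ω, Y1 ω)) A P)
    -- positivity
    (ε : ℝ) (hε : ε ∈ Set.Ioo (0 : ℝ) (1 / 2))
    (π : 𝓛 → ℝ) (hπ : Measurable π)
    (hπver : (fun ω => π (L ω)) =ᵐ[P] P[A | MeasurableSpace.comap L inferInstance])
    (hπbd : ∀ᵐ ω ∂P, ε ≤ π (L ω) ∧ π (L ω) ≤ 1 - ε)
    -- outcome regressions
    (μ1 μ0 : 𝓛 → ℝ) (hμ1 : Measurable μ1) (hμ0 : Measurable μ0)
    (Cμ : ℝ) (hμ1b : ∀ ℓ, |μ1 ℓ| ≤ Cμ) (hμ0b : ∀ ℓ, |μ0 ℓ| ≤ Cμ)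
    (hreg1 : ∀ g : 𝓛 → ℝ, Measurable g → (∃ Cg, ∀ ℓ, |g ℓ| ≤ Cg) →
      ∫ ω, A ω * Y ω * g (L ω) ∂P = ∫ ω, A ω * μ1 (L ω) * g (L ω) ∂P)
    (hreg0 : ∀ g : 𝓛 → ℝ, Measurable g → (∃ Cg, ∀ ℓ, |g ℓ| ≤ Cg) →
      ∫ ω, (1 - A ω) * Y ω * g (L ω) ∂P = ∫ ω, (1 - A ω) * μ0 (L ω) * g (L ω) ∂P) :
    (fun ω => μ1 (L ω)) =ᵐ[P] P[Y1 | MeasurableSpace.comap L inferInstance]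
      ∧ (fun ω => μ0 (L ω)) =ᵐ[P] P[Y0 | MeasurableSpace.comap L inferInstance] := by
  classical
  have hm : MeasurableSpace.comap L inferInstance ≤ ‹MeasurableSpace Ω› := hL.comap_le
  set c0 : ℝ := max C 0 with hc0def
  set clamp : ℝ → ℝ := fun x => max (-c0) (min c0 x) with hclampdef
  have hclampm : Measurable clamp := measurable_const.max (measurable_const.min measurable_id)
  have hc0nn : (0:ℝ) ≤ c0 := le_max_right _ _
  have hclampb : ∀ x, |clamp x| ≤ c0 := by
    intro x
    rw [abs_le]
    exact ⟨le_max_left _ _, max_le (by linarith) (min_le_left _ _)⟩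
  have hclampeq : ∀ x, |x| ≤ C → clamp x = x := by
    intro x hx
    have hxc : |x| ≤ c0 := hx.trans (le_max_left _ _)
    obtain ⟨ha, hb⟩ := abs_le.mp hxc
    rw [hclampdef]
    simp only
    rw [min_eq_right hb, max_eq_right ha]
  have hAb : ∀ ω, |A ω| ≤ 1 := by
    intro ω; rcases hA01 ω with h | h <;> simp [h]
  constructor
  · -- treated arm
    have hY1' : Measurable (fun ω => clamp (Y1 ω)) := hclampm.comp hY1
    have hYeq : ∀ᵐ ω ∂P, clamp (Y1 ω) = Y1 ω := by
      filter_upwards [hY1b] with ω h; exact hclampeq _ h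
    have hCI : CondIndepFun (MeasurableSpace.comap L inferInstance) hL.comap_le
        (fun ω => clamp (Y1 ω)) A P := by
      have := hNUC.comp (φ := fun p : ℝ × ℝ => clamp p.2) (ψ := id)
        (hclampm.comp measurable_snd) measurable_id
      exact this
    have hconsA : ∀ᵐ ω ∂P, A ω * Y ω = A ω * clamp (Y1 ω) := by
      filter_upwards [hcons, hYeq] with ω h1 h2
      rcases hA01 ω with h | h
      · simp [h]
      · rw [h2, h1, h]; ring
    have hπbd1 : ∀ᵐ ω ∂P, ε ≤ π (L ω) ∧ π (L ω) ≤ 1 := by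
      filter_upwards [hπbd] with ω h
      exact ⟨h.1, h.2.trans (by linarith [hε.1])⟩
    have haux := aux_recover P L hL A hA hA01 Y _ hY1' c0 (fun ω => hclampb (Y1 ω))
      hconsA hCI ε hε.1 π hπ hπver hπbd1 μ1 hμ1 Cμ hμ1b hreg1
    exact haux.trans (condExp_congr_ae hYeq)
  · -- control arm
    have hA'm : Measurable (fun ω => 1 - A ω) := measurable_const.sub hA
    have hA01' : ∀ ω, 1 - A ω = 0 ∨ 1 - A ω = 1 := by
      intro ω; rcases hA01 ω with h | h
      · right; rw [h]; ring
      · left; rw [h]; ring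
    have hY0' : Measurable (fun ω => clamp (Y0 ω)) := hclampm.comp hY0
    have hYeq : ∀ᵐ ω ∂P, clamp (Y0 ω) = Y0 ω := by
      filter_upwards [hY0b] with ω h; exact hclampeq _ h
    have hCI : CondIndepFun (MeasurableSpace.comap L inferInstance) hL.comap_le
        (fun ω => clamp (Y0 ω)) (fun ω => 1 - A ω) P := by
      have := hNUC.comp (φ := fun p : ℝ × ℝ => clamp p.1) (ψ := fun x : ℝ => 1 - x)
        (hclampm.comp measurable_fst) (measurable_const.sub measurable_id)
      exact this
    have hconsA : ∀ᵐ ω ∂P, (1 - A ω) * Y ω = (1 - A ω) * clamp (Y0 ω) := by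
      filter_upwards [hcons, hYeq] with ω h1 h2
      rcases hA01 ω with h | h
      · rw [h2, h1, h]; ring
      · rw [h]; ring
    have hAint : Integrable A P :=
      integrable_of_ae_bdd P hA.aestronglyMeasurable (Eventually.of_forall hAb)
    have hπv0 : (fun ω => 1 - π (L ω)) =ᵐ[P]
        P[(fun ω => 1 - A ω) | MeasurableSpace.comap L inferInstance] := by
      have hsub := condExp_sub (μ := P) (m := MeasurableSpace.comap L inferInstance)
        (integrable_const (1:ℝ)) hAint
      rw [condExp_const hm] at hsub
      have hrfl : P[(fun ω => 1 - A ω) | MeasurableSpace.comap L inferInstance]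
          = P[(fun _ => (1:ℝ)) - A | MeasurableSpace.comap L inferInstance] := rfl
      rw [hrfl]
      filter_upwards [hsub, hπver] with ω h1 h2
      have h2' : π (L ω) = (P[A | MeasurableSpace.comap L inferInstance]) ω := h2
      rw [h1]
      simp only [Pi.sub_apply]
      rw [h2']
    have hπbd0 : ∀ᵐ ω ∂P, ε ≤ 1 - π (L ω) ∧ 1 - π (L ω) ≤ 1 := by
      filter_upwards [hπbd] with ω h
      constructor <;> [linarith [h.2]; linarith [hε.1, h.1]]
    have haux := aux_recover P L hL (fun ω => 1 - A ω) hA'm hA01' Y _ hY0' c0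
      (fun ω => hclampb (Y0 ω)) hconsA hCI ε hε.1 (fun ℓ => 1 - π ℓ)
      (measurable_const.sub hπ) hπv0 hπbd0 μ0 hμ0 Cμ hμ0b hreg0
    exact haux.trans (condExp_congr_ae hYeq)
end

section
/- Double robustness with respect to the propensity score: if the outcome regression μ is correctly specified, then for ANY measurable function π̄ : 𝓛 → ℝ with ε ≤ π̄(ℓ) ≤ 1−ε for all ℓ (possibly different from the true propensity score π), the augmented estimating function remains unbiased for the average treatment effect: E[μ(1,L) − μ(0,L) + (A/π̄(L))·(Y − μ(1,L)) − ((1−A)/(1−π̄(L)))·(Y − μ(0,L))] = E[Y¹ − Y⁰]. -/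
open MeasureTheory ProbabilityTheory Filter Topology

section
variable {Ω : Type*} {mΩ : MeasurableSpace Ω}

lemma abs_mul2_le {a b A B : ℝ} (ha : |a| ≤ A) (hb : |b| ≤ B) : |a * b| ≤ A * B := by
  rw [abs_mul]; exact mul_le_mul ha hb (abs_nonneg _) ((abs_nonneg _).trans ha)

lemma abs_mul3_le {a b c A B C : ℝ} (ha : |a| ≤ A) (hb : |b| ≤ B) (hc : |c| ≤ C) :
    |a * b * c| ≤ A * B * C :=
  abs_mul2_le (abs_mul2_le ha hb) hc

/-- integrable of a.e. bounded -/
lemma int_bdd (P : Measure Ω) [IsFiniteMeasure P] {f : Ω → ℝ} (hf : Measurable f)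
    {c : ℝ} (h : ∀ᵐ ω ∂P, |f ω| ≤ c) : Integrable f P :=
  ⟨hf.aestronglyMeasurable, HasFiniteIntegral.of_bounded (C := c) (by simpa [Real.norm_eq_abs] using h)⟩

/-- tower: for bounded m-measurable W, ∫ W·X = ∫ W·E[X|m] -/
lemma my_tower (P : Measure Ω) [IsProbabilityMeasure P] {m : MeasurableSpace Ω} (hm : m ≤ mΩ)
    {X W : Ω → ℝ} (hX : Integrable X P) (hW : Measurable[m] W)
    {c : ℝ} (hWb : ∀ ω, |W ω| ≤ c) :
    ∫ ω, W ω * X ω ∂P = ∫ ω, W ω * (P[X|m]) ω ∂P := by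
  have hWsm := (hW.mono hm le_rfl).aestronglyMeasurable (μ := P)
  have hint : Integrable (W * X) P :=
    hX.bdd_mul (c := c) hWsm
      (Eventually.of_forall fun ω => by simpa [Real.norm_eq_abs] using hWb ω)
  calc ∫ ω, W ω * X ω ∂P = ∫ ω, (W * X) ω ∂P := rfl
    _ = ∫ ω, (P[W * X|m]) ω ∂P := (integral_condExp hm (f := W * X)).symm
    _ = ∫ ω, (W * P[X|m]) ω ∂P :=
        integral_congr_ae (condExp_mul_of_stronglyMeasurable_left hW.stronglyMeasurable hint hX)
    _ = ∫ ω, W ω * (P[X|m]) ω ∂P := rfl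

/-- extension from indicators of V-preimages to V itself -/
lemma ext_zero (P : Measure Ω) [IsProbabilityMeasure P] {V R : Ω → ℝ}
    (hV : Measurable V) (hVint : Integrable V P) (hR : Measurable R)
    {c : ℝ} (hRb : ∀ ω, |R ω| ≤ c)
    (hbase : ∀ s : Set ℝ, MeasurableSet s →
      ∫ ω, Set.indicator s (fun _ => (1:ℝ)) (V ω) * R ω ∂P = 0) :
    ∫ ω, V ω * R ω ∂P = 0 := by
  set c' : ℝ := max c 0 with hc'
  have hRb' : ∀ ω, |R ω| ≤ c' := fun ω => (hRb ω).trans (le_max_left _ _)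
  have hc : 0 ≤ c' := le_max_right _ _
  -- integrability of simple-function integrands
  have int : ∀ ψ : SimpleFunc ℝ ℝ, Integrable (fun ω => ψ (V ω) * R ω) P := by
    intro ψ
    obtain ⟨Cψ, hCψ⟩ := ψ.exists_forall_norm_le
    refine int_bdd P ((ψ.measurable.comp hV).mul hR) (c := Cψ * c')
      (Eventually.of_forall fun ω => ?_)
    rw [abs_mul]
    exact mul_le_mul (by simpa [Real.norm_eq_abs] using hCψ (V ω)) (hRb' ω) (abs_nonneg _)
      ((abs_nonneg _).trans (by simpa [Real.norm_eq_abs] using hCψ (V ω)))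
  -- the identity for simple functions of V
  have hsimple : ∀ ψ : SimpleFunc ℝ ℝ, ∫ ω, ψ (V ω) * R ω ∂P = 0 := by
    intro ψ
    induction ψ using SimpleFunc.induction with
    | const c₀ hs =>
      rename_i s
      have h2 : (fun ω => (SimpleFunc.piecewise s hs (SimpleFunc.const ℝ c₀)
          (SimpleFunc.const ℝ 0)) (V ω) * R ω)
          = fun ω => c₀ * (Set.indicator s (fun _ => (1:ℝ)) (V ω) * R ω) := by
        funext ω
        by_cases h : V ω ∈ s <;>
          simp [SimpleFunc.piecewise_apply, Set.indicator_apply, h, mul_assoc]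
      rw [show (∫ ω, (SimpleFunc.piecewise s hs (SimpleFunc.const ℝ c₀)
          (SimpleFunc.const ℝ 0)) (V ω) * R ω ∂P)
          = ∫ ω, c₀ * (Set.indicator s (fun _ => (1:ℝ)) (V ω) * R ω) ∂P from by rw [← h2],
        integral_const_mul, hbase s hs, mul_zero]
    | add hdisj hf hg =>
      rename_i f g
      have : (fun ω => (f + g) (V ω) * R ω)
          = fun ω => f (V ω) * R ω + g (V ω) * R ω := by
        funext ω; simp [add_mul]
      rw [this, integral_add (int f) (int g), hf, hg, add_zero]
  -- approximation of V
  set ψn : ℕ → SimpleFunc ℝ ℝ :=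
    fun n => SimpleFunc.approxOn (id : ℝ → ℝ) measurable_id Set.univ 0 (Set.mem_univ 0) n with hψn
  have hlim : Tendsto (fun n => ∫ ω, (ψn n) (V ω) * R ω ∂P) atTop (𝓝 (∫ ω, V ω * R ω ∂P)) := by
    refine tendsto_integral_of_dominated_convergence
      (fun ω => (|V ω| + |V ω|) * c')
      (fun n => (((ψn n).measurable.comp hV).mul hR).aestronglyMeasurable)
      (((hVint.abs.add hVint.abs).mul_const c'))
      (fun n => Eventually.of_forall fun ω => ?_)
      (Eventually.of_forall fun ω => ?_)
    · rw [Real.norm_eq_abs, abs_mul]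
      refine mul_le_mul ?_ (hRb' ω) (abs_nonneg _) (by positivity)
      simpa [Real.norm_eq_abs] using
        SimpleFunc.norm_approxOn_zero_le (measurable_id : Measurable (id : ℝ → ℝ))
          (Set.mem_univ 0) (V ω) n
    · refine Tendsto.mul_const _ ?_
      simpa using SimpleFunc.tendsto_approxOn (measurable_id : Measurable (id : ℝ → ℝ))
        (Set.mem_univ 0) (x := V ω) (by simp)
  have : Tendsto (fun _ : ℕ => (0:ℝ)) atTop (𝓝 (∫ ω, V ω * R ω ∂P)) := by
    simpa [hsimple] using hlim
  exact tendsto_nhds_unique this tendsto_const_nhds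

end

section ArmSec
variable {Ω : Type*} {m : MeasurableSpace Ω} {mΩ : MeasurableSpace Ω}

/-- key lemma: if A' is {0,1}-valued, Q a bounded m-measurable version of E[A'|m],
G bounded m-measurable, and V ⫫ A' | m, then ∫ V (A' - Q) G = 0 -/
lemma arm [StandardBorelSpace Ω] (P : Measure Ω) [IsProbabilityMeasure P]
    (hm : m ≤ mΩ)
    {V A' Q G : Ω → ℝ}
    (hV : Measurable V) (hVint : Integrable V P)
    (hA' : Measurable A') (hA'01 : ∀ ω, A' ω = 0 ∨ A' ω = 1)
    (hQ : Measurable[m] Q) (hQb : ∀ ω, |Q ω| ≤ 1)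
    (hQver : Q =ᵐ[P] P[A'|m])
    (hG : Measurable[m] G) {CG : ℝ} (hGb : ∀ ω, |G ω| ≤ CG)
    (hCI : CondIndepFun m hm V A' P) :
    ∫ ω, V ω * ((A' ω - Q ω) * G ω) ∂P = 0 := by
  classical
  have hQm : Measurable Q := hQ.mono hm le_rfl
  have hGm : Measurable G := hG.mono hm le_rfl
  have hA'b : ∀ ω, |A' ω| ≤ 1 := fun ω => by rcases hA'01 ω with h | h <;> simp [h]
  refine ext_zero (R := fun ω => (A' ω - Q ω) * G ω) P hV hVint
    ((hA'.sub hQm).mul hGm) (c := 2 * CG) (fun ω => ?_) (fun s hs => ?_)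
  · rw [abs_mul]
    refine mul_le_mul ?_ (hGb ω) (abs_nonneg _) (by norm_num)
    calc |A' ω - Q ω| ≤ |A' ω| + |Q ω| := abs_sub _ _
      _ ≤ 2 := by have := hA'b ω; have := hQb ω; linarith
  -- base case: indicators of V-preimages
  set I1 : Ω → ℝ := fun ω => Set.indicator s (fun _ => (1:ℝ)) (V ω) with hI1
  have hI1m : Measurable I1 := (measurable_const.indicator hs).comp hV
  have hI1b : ∀ ω, |I1 ω| ≤ 1 := fun ω => by
    by_cases hv : V ω ∈ s <;> simp [hI1, Set.indicator_apply, hv]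
  have hXint : Integrable (fun ω => I1 ω * A' ω) P := by
    refine int_bdd P (hI1m.mul hA') (c := 1) (Eventually.of_forall fun ω => ?_)
    rw [abs_mul]
    simpa using mul_le_mul (hI1b ω) (hA'b ω) (abs_nonneg _) zero_le_one
  have hindint : Integrable ((V ⁻¹' s).indicator (fun _ => (1:ℝ))) P := by
    refine int_bdd P (measurable_const.indicator (hV hs)) (c := 1)
      (Eventually.of_forall fun ω => ?_)
    by_cases hv : ω ∈ V ⁻¹' s <;> simp [Set.indicator_apply, hv]
  have hWQb : ∀ ω, |G ω * Q ω| ≤ CG := fun ω => by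
    rw [abs_mul]
    simpa using mul_le_mul (hGb ω) (hQb ω) (abs_nonneg _) ((abs_nonneg _).trans (hGb ω))
  -- identify the conditional expectation of I1 * A'
  have hXeq : (fun ω => I1 ω * A' ω) = (V ⁻¹' s ∩ A' ⁻¹' {1}).indicator (fun _ => (1:ℝ)) := by
    funext ω
    rcases hA'01 ω with h | h <;> by_cases hv : V ω ∈ s <;>
      simp [hI1, Set.indicator_apply, hv, h]
  have hCI' := (condIndepFun_iff_condExp_inter_preimage_eq_mul hV hA').1 hCI s {1} hs
    (measurableSet_singleton 1)
  have hA'eq : A' = (A' ⁻¹' {1}).indicator (fun _ => (1:ℝ)) := by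
    funext ω; rcases hA'01 ω with h | h <;> simp [Set.indicator_apply, h]
  have hQeq : (P⟦A' ⁻¹' {1}|m⟧) =ᵐ[P] Q := by
    have h1 : (P⟦A' ⁻¹' {1}|m⟧) = P[A'|m] := by rw [← hA'eq]
    rw [h1]; exact hQver.symm
  have hPX : P[(fun ω => I1 ω * A' ω)|m] =ᵐ[P] fun ω => (P⟦V ⁻¹' s|m⟧) ω * Q ω := by
    rw [hXeq]
    refine hCI'.trans ?_
    filter_upwards [hQeq] with ω hω
    rw [hω]
  have key : ∫ ω, G ω * (I1 ω * A' ω) ∂P = ∫ ω, G ω * (I1 ω * Q ω) ∂P := by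
    calc ∫ ω, G ω * (I1 ω * A' ω) ∂P
        = ∫ ω, G ω * (P[(fun ω => I1 ω * A' ω)|m]) ω ∂P :=
          my_tower P hm hXint hG hGb
      _ = ∫ ω, (G ω * Q ω) * (P[(V ⁻¹' s).indicator (fun _ => (1:ℝ))|m]) ω ∂P := by
          refine integral_congr_ae ?_
          filter_upwards [hPX] with ω hω
          rw [hω]; ring
      _ = ∫ ω, (G ω * Q ω) * ((V ⁻¹' s).indicator (fun _ => (1:ℝ)) ω) ∂P :=
          (my_tower P hm hindint (hG.mul hQ) hWQb).symm
      _ = ∫ ω, G ω * (I1 ω * Q ω) ∂P := by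
          refine integral_congr_ae (Eventually.of_forall fun ω => ?_)
          by_cases hv : V ω ∈ s <;>
            simp [hI1, Set.indicator_apply, hv, Set.mem_preimage]
  have hi1 : Integrable (fun ω => G ω * (I1 ω * A' ω)) P := by
    refine int_bdd P (hGm.mul (hI1m.mul hA')) (c := CG) (Eventually.of_forall fun ω => ?_)
    rw [abs_mul]
    have h2 : |I1 ω * A' ω| ≤ 1 := by
      rw [abs_mul]; simpa using mul_le_mul (hI1b ω) (hA'b ω) (abs_nonneg _) zero_le_one
    simpa using mul_le_mul (hGb ω) h2 (abs_nonneg _) ((abs_nonneg _).trans (hGb ω))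
  have hi2 : Integrable (fun ω => G ω * (I1 ω * Q ω)) P := by
    refine int_bdd P (hGm.mul (hI1m.mul hQm)) (c := CG) (Eventually.of_forall fun ω => ?_)
    rw [abs_mul]
    have h2 : |I1 ω * Q ω| ≤ 1 := by
      rw [abs_mul]; simpa using mul_le_mul (hI1b ω) (hQb ω) (abs_nonneg _) zero_le_one
    simpa using mul_le_mul (hGb ω) h2 (abs_nonneg _) ((abs_nonneg _).trans (hGb ω))
  have hsplit : (fun ω => I1 ω * ((A' ω - Q ω) * G ω))
      = fun ω => G ω * (I1 ω * A' ω) - G ω * (I1 ω * Q ω) := by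
    funext ω; ring
  rw [hsplit, integral_sub hi1 hi2, key, sub_self]

end ArmSec

/-- Double robustness with respect to the propensity score: if the outcome
regression `μ` is correctly specified, then for ANY measurable `π̄ : 𝓛 → ℝ` with
`ε ≤ π̄(ℓ) ≤ 1 − ε` for all `ℓ` (possibly different from the true propensity score `π`), the
augmented estimating function remains unbiased for the average treatment effect. -/
theorem double_robustness_wrt_propensity
    {Ω : Type*} [MeasurableSpace Ω] [StandardBorelSpace Ω]
    (P : Measure Ω) [IsProbabilityMeasure P]
    {𝓛 : Type*} [MeasurableSpace 𝓛] [StandardBorelSpace 𝓛]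
    (L : Ω → 𝓛) (hL : Measurable L)
    (A : Ω → ℝ) (hA : Measurable A) (hA01 : ∀ ω, A ω = 0 ∨ A ω = 1)
    (Y Y0 Y1 : Ω → ℝ) (hY : Measurable Y) (hY0 : Measurable Y0) (hY1 : Measurable Y1)
    (C : ℝ) (hYb : ∀ᵐ ω ∂P, |Y ω| ≤ C) (hY0b : ∀ᵐ ω ∂P, |Y0 ω| ≤ C)
    (hY1b : ∀ᵐ ω ∂P, |Y1 ω| ≤ C)
    -- consistency
    (hcons : ∀ᵐ ω ∂P, Y ω = A ω * Y1 ω + (1 - A ω) * Y0 ω)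
    -- no unmeasured confounding: (Y⁰, Y¹) ⫫ A ∣ σ(L)
    (hNUC : CondIndepFun (MeasurableSpace.comap L inferInstance) hL.comap_le
      (fun ω => (Y0 ω, Y1 ω)) A P)
    -- positivity (true propensity score)
    (ε : ℝ) (hε : ε ∈ Set.Ioo (0 : ℝ) (1 / 2))
    (π : 𝓛 → ℝ) (hπ : Measurable π)
    (hπver : (fun ω => π (L ω)) =ᵐ[P] P[A | MeasurableSpace.comap L inferInstance])
    (hπbd : ∀ᵐ ω ∂P, ε ≤ π (L ω) ∧ π (L ω) ≤ 1 - ε)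
    -- outcome regressions (correctly specified)
    (μ1 μ0 : 𝓛 → ℝ) (hμ1 : Measurable μ1) (hμ0 : Measurable μ0)
    (Cμ : ℝ) (hμ1b : ∀ ℓ, |μ1 ℓ| ≤ Cμ) (hμ0b : ∀ ℓ, |μ0 ℓ| ≤ Cμ)
    (hreg1 : ∀ g : 𝓛 → ℝ, Measurable g → (∃ Cg, ∀ ℓ, |g ℓ| ≤ Cg) →
      ∫ ω, A ω * Y ω * g (L ω) ∂P = ∫ ω, A ω * μ1 (L ω) * g (L ω) ∂P)
    (hreg0 : ∀ g : 𝓛 → ℝ, Measurable g → (∃ Cg, ∀ ℓ, |g ℓ| ≤ Cg) →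
      ∫ ω, (1 - A ω) * Y ω * g (L ω) ∂P = ∫ ω, (1 - A ω) * μ0 (L ω) * g (L ω) ∂P)
    -- arbitrary (possibly misspecified) propensity score
    (πbar : 𝓛 → ℝ) (hπbar : Measurable πbar)
    (hπbarbd : ∀ ℓ, ε ≤ πbar ℓ ∧ πbar ℓ ≤ 1 - ε) :
    ∫ ω, (μ1 (L ω) - μ0 (L ω)
        + (A ω / πbar (L ω)) * (Y ω - μ1 (L ω))
        - ((1 - A ω) / (1 - πbar (L ω))) * (Y ω - μ0 (L ω))) ∂P
      = ∫ ω, (Y1 ω - Y0 ω) ∂P := by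
  obtain ⟨hε0, hε2⟩ := hε
  have hε1 : ε ≤ 1 - ε := by linarith
  have hεinv0 : (0:ℝ) ≤ ε⁻¹ := le_of_lt (inv_pos.2 hε0)
  -- clamped propensity score
  set π' : 𝓛 → ℝ := fun ℓ => max ε (min (1 - ε) (π ℓ)) with hπ'def
  have hπ'meas : Measurable π' := measurable_const.max (measurable_const.min hπ)
  have hπ'lb : ∀ ℓ, ε ≤ π' ℓ := fun ℓ => le_max_left _ _
  have hπ'ub : ∀ ℓ, π' ℓ ≤ 1 - ε := fun ℓ => max_le hε1 (min_le_left _ _)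
  have hπ'pos : ∀ ℓ, 0 < π' ℓ := fun ℓ => lt_of_lt_of_le hε0 (hπ'lb ℓ)
  have h1π'pos : ∀ ℓ, 0 < 1 - π' ℓ := fun ℓ => by have := hπ'ub ℓ; linarith
  have hπ'ae : (fun ω => π' (L ω)) =ᵐ[P] fun ω => π (L ω) := by
    filter_upwards [hπbd] with ω hω
    simp only [hπ'def]
    rw [min_eq_right hω.2, max_eq_right hω.1]
  have hQver1 : (fun ω => π' (L ω)) =ᵐ[P] P[A | MeasurableSpace.comap L inferInstance] :=
    hπ'ae.trans hπver
  have hLm : Measurable[MeasurableSpace.comap L inferInstance] L :=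
    measurable_iff_comap_le.mpr le_rfl
  -- integrability
  have hA1 : ∀ ω, |A ω| ≤ 1 := fun ω => by rcases hA01 ω with h | h <;> simp [h]
  have hAint : Integrable A P := int_bdd P hA (Eventually.of_forall hA1)
  have hYint : Integrable Y P := int_bdd P hY hYb
  have hY1int : Integrable Y1 P := int_bdd P hY1 hY1b
  have hY0int : Integrable Y0 P := int_bdd P hY0 hY0b
  -- consistency consequences
  have hAY1 : ∀ᵐ ω ∂P, A ω * Y ω = A ω * Y1 ω := by
    filter_upwards [hcons] with ω h
    rcases hA01 ω with h0 | h0 <;> rw [h, h0] <;> ring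
  have h1AY0 : ∀ᵐ ω ∂P, (1 - A ω) * Y ω = (1 - A ω) * Y0 ω := by
    filter_upwards [hcons] with ω h
    rcases hA01 ω with h0 | h0 <;> rw [h, h0] <;> ring
  -- bounds for inverse propensity weights
  have hinvbd : ∀ (q : 𝓛 → ℝ), (∀ ℓ, ε ≤ q ℓ) → ∀ ℓ, |(q ℓ)⁻¹| ≤ ε⁻¹ := by
    intro q hq ℓ
    rw [abs_inv, abs_of_pos (lt_of_lt_of_le hε0 (hq ℓ))]
    exact one_div ε ▸ inv_anti₀ hε0 (hq ℓ)
  -- augmentation terms: unbiasedness in the πbar weights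
  have Z1 : ∫ ω, A ω * Y ω * (πbar (L ω))⁻¹ ∂P
      = ∫ ω, A ω * μ1 (L ω) * (πbar (L ω))⁻¹ ∂P :=
    hreg1 (fun ℓ => (πbar ℓ)⁻¹) hπbar.inv
      ⟨ε⁻¹, hinvbd _ (fun ℓ => (hπbarbd ℓ).1)⟩
  have Z0 : ∫ ω, (1 - A ω) * Y ω * (1 - πbar (L ω))⁻¹ ∂P
      = ∫ ω, (1 - A ω) * μ0 (L ω) * (1 - πbar (L ω))⁻¹ ∂P :=
    hreg0 (fun ℓ => (1 - πbar ℓ)⁻¹) (measurable_const.sub hπbar).inv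
      ⟨ε⁻¹, hinvbd _ (fun ℓ => by have := (hπbarbd ℓ).2; linarith)⟩
  -- identification of E[Y1]
  have chain1 : ∫ ω, A ω * Y ω * (π' (L ω))⁻¹ ∂P
      = ∫ ω, A ω * μ1 (L ω) * (π' (L ω))⁻¹ ∂P :=
    hreg1 (fun ℓ => (π' ℓ)⁻¹) hπ'meas.inv ⟨ε⁻¹, hinvbd _ hπ'lb⟩
  have left1 : ∫ ω, A ω * Y ω * (π' (L ω))⁻¹ ∂P
      = ∫ ω, A ω * Y1 ω * (π' (L ω))⁻¹ ∂P := by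
    refine integral_congr_ae ?_
    filter_upwards [hAY1] with ω h
    rw [h]
  have hCI1 : CondIndepFun (MeasurableSpace.comap L inferInstance) hL.comap_le Y1 A P := by
    have h := hNUC.comp measurable_snd measurable_id
    exact h
  have hQb1 : ∀ ω, |π' (L ω)| ≤ 1 := fun ω => by
    rw [abs_of_pos (hπ'pos _)]; have := hπ'ub (L ω); linarith
  have hGb1 : ∀ ω, |(π' (L ω))⁻¹| ≤ ε⁻¹ := fun ω => hinvbd _ hπ'lb (L ω)
  have armres1 := arm (Q := fun ω => π' (L ω)) (G := fun ω => (π' (L ω))⁻¹)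
    P hL.comap_le hY1 hY1int hA hA01 (hπ'meas.comp hLm) hQb1 hQver1
    (hπ'meas.inv.comp hLm) hGb1 hCI1
  have hint31 : Integrable (fun ω => A ω * Y1 ω * (π' (L ω))⁻¹) P := by
    refine int_bdd P ((hA.mul hY1).mul (hπ'meas.inv.comp hL)) (c := 1 * C * ε⁻¹) ?_
    filter_upwards [hY1b] with ω h
    exact abs_mul3_le (hA1 ω) h (hGb1 ω)
  have left2 : ∫ ω, A ω * Y1 ω * (π' (L ω))⁻¹ ∂P = ∫ ω, Y1 ω ∂P := by
    have hpt : ∀ ω, Y1 ω * ((A ω - π' (L ω)) * (π' (L ω))⁻¹)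
        = A ω * Y1 ω * (π' (L ω))⁻¹ - Y1 ω := fun ω => by
      have h0 : π' (L ω) ≠ 0 := ne_of_gt (hπ'pos _)
      field_simp
    rw [integral_congr_ae (Eventually.of_forall fun ω => hpt ω)] at armres1
    rw [integral_sub hint31 hY1int] at armres1
    linarith
  have right1 : ∫ ω, A ω * μ1 (L ω) * (π' (L ω))⁻¹ ∂P = ∫ ω, μ1 (L ω) ∂P := by
    have hWm : Measurable[MeasurableSpace.comap L inferInstance]
        (fun ω => μ1 (L ω) * (π' (L ω))⁻¹) := (hμ1.comp hLm).mul (hπ'meas.inv.comp hLm)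
    have hWb : ∀ ω, |μ1 (L ω) * (π' (L ω))⁻¹| ≤ Cμ * ε⁻¹ :=
      fun ω => abs_mul2_le (hμ1b (L ω)) (hGb1 ω)
    have t := my_tower P hL.comap_le hAint hWm hWb
    calc ∫ ω, A ω * μ1 (L ω) * (π' (L ω))⁻¹ ∂P
        = ∫ ω, (μ1 (L ω) * (π' (L ω))⁻¹) * A ω ∂P := by
          refine integral_congr_ae (Eventually.of_forall fun ω => ?_); ring
      _ = ∫ ω, (μ1 (L ω) * (π' (L ω))⁻¹)
            * (P[A | MeasurableSpace.comap L inferInstance]) ω ∂P := t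
      _ = ∫ ω, (μ1 (L ω) * (π' (L ω))⁻¹) * π' (L ω) ∂P := by
          refine integral_congr_ae ?_
          filter_upwards [hQver1] with ω h
          rw [← h]
      _ = ∫ ω, μ1 (L ω) ∂P := by
          refine integral_congr_ae (Eventually.of_forall fun ω => ?_)
          have h0 : π' (L ω) ≠ 0 := ne_of_gt (hπ'pos _)
          field_simp
  have E1 : ∫ ω, μ1 (L ω) ∂P = ∫ ω, Y1 ω ∂P := by
    rw [← right1, ← chain1, left1, left2]
  -- identification of E[Y0]
  have hA'01 : ∀ ω, (1 - A ω) = 0 ∨ (1 - A ω) = 1 := fun ω => by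
    rcases hA01 ω with h | h
    · right; rw [h]; ring
    · left; rw [h]; ring
  have hA'meas : Measurable (fun ω => 1 - A ω) := measurable_const.sub hA
  have hsubce : P[(fun ω => 1 - A ω) | MeasurableSpace.comap L inferInstance]
      =ᵐ[P] fun ω => 1 - (P[A | MeasurableSpace.comap L inferInstance]) ω := by
    have h1 := condExp_sub (m := MeasurableSpace.comap L inferInstance) (μ := P)
      (f := fun _ : Ω => (1:ℝ)) (g := A) (integrable_const 1) hAint
    have h2 : P[(fun _ : Ω => (1:ℝ)) | MeasurableSpace.comap L inferInstance]
        = fun _ => (1:ℝ) := condExp_const hL.comap_le 1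
    filter_upwards [h1] with ω h
    have : ((fun _ : Ω => (1:ℝ)) - A) = fun ω => 1 - A ω := rfl
    rw [← this, h, h2]
    simp
  have hQver0 : (fun ω => 1 - π' (L ω))
      =ᵐ[P] P[(fun ω => 1 - A ω) | MeasurableSpace.comap L inferInstance] := by
    filter_upwards [hsubce, hQver1] with ω h1 h2
    rw [h1, ← h2]
  have hCI0 : CondIndepFun (MeasurableSpace.comap L inferInstance) hL.comap_le
      Y0 (fun ω => 1 - A ω) P := by
    have h := hNUC.comp (φ := Prod.fst) (ψ := fun x : ℝ => 1 - x) measurable_fst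
      (measurable_const.sub measurable_id)
    exact h
  have hπ'lb0 : ∀ ℓ, ε ≤ 1 - π' ℓ := fun ℓ => by have := hπ'ub ℓ; linarith
  have chain0 : ∫ ω, (1 - A ω) * Y ω * (1 - π' (L ω))⁻¹ ∂P
      = ∫ ω, (1 - A ω) * μ0 (L ω) * (1 - π' (L ω))⁻¹ ∂P :=
    hreg0 (fun ℓ => (1 - π' ℓ)⁻¹) (measurable_const.sub hπ'meas).inv
      ⟨ε⁻¹, hinvbd _ hπ'lb0⟩
  have left10 : ∫ ω, (1 - A ω) * Y ω * (1 - π' (L ω))⁻¹ ∂P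
      = ∫ ω, (1 - A ω) * Y0 ω * (1 - π' (L ω))⁻¹ ∂P := by
    refine integral_congr_ae ?_
    filter_upwards [h1AY0] with ω h
    rw [h]
  have hQb0 : ∀ ω, |1 - π' (L ω)| ≤ 1 := fun ω => by
    rw [abs_of_pos (h1π'pos _)]; have := hπ'lb (L ω); linarith
  have hGb0 : ∀ ω, |(1 - π' (L ω))⁻¹| ≤ ε⁻¹ := fun ω => hinvbd _ hπ'lb0 (L ω)
  have hA'1 : ∀ ω, |1 - A ω| ≤ 1 := fun ω => by rcases hA'01 ω with h | h <;> rw [h] <;> norm_num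
  have armres0 := arm (Q := fun ω => 1 - π' (L ω)) (G := fun ω => (1 - π' (L ω))⁻¹)
    P hL.comap_le hY0 hY0int hA'meas hA'01
    ((measurable_const.sub hπ'meas).comp hLm) hQb0 hQver0
    ((measurable_const.sub hπ'meas).inv.comp hLm) hGb0 hCI0
  have hint30 : Integrable (fun ω => (1 - A ω) * Y0 ω * (1 - π' (L ω))⁻¹) P := by
    refine int_bdd P ((hA'meas.mul hY0).mul ((measurable_const.sub hπ'meas).inv.comp hL))
      (c := 1 * C * ε⁻¹) ?_
    filter_upwards [hY0b] with ω h
    exact abs_mul3_le (hA'1 ω) h (hGb0 ω)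
  have left20 : ∫ ω, (1 - A ω) * Y0 ω * (1 - π' (L ω))⁻¹ ∂P = ∫ ω, Y0 ω ∂P := by
    have hpt : ∀ ω, Y0 ω * (((1 - A ω) - (1 - π' (L ω))) * (1 - π' (L ω))⁻¹)
        = (1 - A ω) * Y0 ω * (1 - π' (L ω))⁻¹ - Y0 ω := fun ω => by
      have h0 : 1 - π' (L ω) ≠ 0 := ne_of_gt (h1π'pos _)
      field_simp
    rw [integral_congr_ae (Eventually.of_forall fun ω => hpt ω)] at armres0
    rw [integral_sub hint30 hY0int] at armres0
    linarith
  have hA'int : Integrable (fun ω => 1 - A ω) P := (integrable_const 1).sub hAint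
  have right0 : ∫ ω, (1 - A ω) * μ0 (L ω) * (1 - π' (L ω))⁻¹ ∂P = ∫ ω, μ0 (L ω) ∂P := by
    have hWm : Measurable[MeasurableSpace.comap L inferInstance]
        (fun ω => μ0 (L ω) * (1 - π' (L ω))⁻¹) :=
      (hμ0.comp hLm).mul ((measurable_const.sub hπ'meas).inv.comp hLm)
    have hWb : ∀ ω, |μ0 (L ω) * (1 - π' (L ω))⁻¹| ≤ Cμ * ε⁻¹ :=
      fun ω => abs_mul2_le (hμ0b (L ω)) (hGb0 ω)
    have t := my_tower P hL.comap_le hA'int hWm hWb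
    calc ∫ ω, (1 - A ω) * μ0 (L ω) * (1 - π' (L ω))⁻¹ ∂P
        = ∫ ω, (μ0 (L ω) * (1 - π' (L ω))⁻¹) * (1 - A ω) ∂P := by
          refine integral_congr_ae (Eventually.of_forall fun ω => ?_); ring
      _ = ∫ ω, (μ0 (L ω) * (1 - π' (L ω))⁻¹)
            * (P[(fun ω => 1 - A ω) | MeasurableSpace.comap L inferInstance]) ω ∂P := t
      _ = ∫ ω, (μ0 (L ω) * (1 - π' (L ω))⁻¹) * (1 - π' (L ω)) ∂P := by
          refine integral_congr_ae ?_
          filter_upwards [hQver0] with ω h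
          rw [← h]
      _ = ∫ ω, μ0 (L ω) ∂P := by
          refine integral_congr_ae (Eventually.of_forall fun ω => ?_)
          have h0 : 1 - π' (L ω) ≠ 0 := ne_of_gt (h1π'pos _)
          field_simp
  have E0 : ∫ ω, μ0 (L ω) ∂P = ∫ ω, Y0 ω ∂P := by
    rw [← right0, ← chain0, left10, left20]
  -- final assembly
  have hbπ1 : ∀ ℓ, |(πbar ℓ)⁻¹| ≤ ε⁻¹ := hinvbd _ (fun ℓ => (hπbarbd ℓ).1)
  have hbπ0 : ∀ ℓ, |(1 - πbar ℓ)⁻¹| ≤ ε⁻¹ :=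
    hinvbd _ (fun ℓ => by have := (hπbarbd ℓ).2; linarith)
  have i1 : Integrable (fun ω => μ1 (L ω)) P :=
    int_bdd P (hμ1.comp hL) (Eventually.of_forall fun ω => hμ1b (L ω))
  have i2 : Integrable (fun ω => μ0 (L ω)) P :=
    int_bdd P (hμ0.comp hL) (Eventually.of_forall fun ω => hμ0b (L ω))
  have i3 : Integrable (fun ω => A ω * Y ω * (πbar (L ω))⁻¹) P := by
    refine int_bdd P ((hA.mul hY).mul (hπbar.inv.comp hL)) (c := 1 * C * ε⁻¹) ?_
    filter_upwards [hYb] with ω h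
    exact abs_mul3_le (hA1 ω) h (hbπ1 (L ω))
  have i4 : Integrable (fun ω => A ω * μ1 (L ω) * (πbar (L ω))⁻¹) P := by
    refine int_bdd P ((hA.mul (hμ1.comp hL)).mul (hπbar.inv.comp hL)) (c := 1 * Cμ * ε⁻¹)
      (Eventually.of_forall fun ω => ?_)
    exact abs_mul3_le (hA1 ω) (hμ1b (L ω)) (hbπ1 (L ω))
  have i5 : Integrable (fun ω => (1 - A ω) * Y ω * (1 - πbar (L ω))⁻¹) P := by
    refine int_bdd P ((hA'meas.mul hY).mul ((measurable_const.sub hπbar).inv.comp hL))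
      (c := 1 * C * ε⁻¹) ?_
    filter_upwards [hYb] with ω h
    exact abs_mul3_le (hA'1 ω) h (hbπ0 (L ω))
  have i6 : Integrable (fun ω => (1 - A ω) * μ0 (L ω) * (1 - πbar (L ω))⁻¹) P := by
    refine int_bdd P ((hA'meas.mul (hμ0.comp hL)).mul
      ((measurable_const.sub hπbar).inv.comp hL)) (c := 1 * Cμ * ε⁻¹)
      (Eventually.of_forall fun ω => ?_)
    exact abs_mul3_le (hA'1 ω) (hμ0b (L ω)) (hbπ0 (L ω))
  calc ∫ ω, (μ1 (L ω) - μ0 (L ω)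
        + (A ω / πbar (L ω)) * (Y ω - μ1 (L ω))
        - ((1 - A ω) / (1 - πbar (L ω))) * (Y ω - μ0 (L ω))) ∂P
      = ∫ ω, ((μ1 (L ω) - μ0 (L ω))
          + (A ω * Y ω * (πbar (L ω))⁻¹ - A ω * μ1 (L ω) * (πbar (L ω))⁻¹)
          - ((1 - A ω) * Y ω * (1 - πbar (L ω))⁻¹
              - (1 - A ω) * μ0 (L ω) * (1 - πbar (L ω))⁻¹)) ∂P := by
        refine integral_congr_ae (Eventually.of_forall fun ω => ?_)
        ring
    _ = ∫ ω, (Y1 ω - Y0 ω) ∂P := by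
        have hs1 : ∫ ω, ((μ1 (L ω) - μ0 (L ω))
              + (A ω * Y ω * (πbar (L ω))⁻¹ - A ω * μ1 (L ω) * (πbar (L ω))⁻¹)
              - ((1 - A ω) * Y ω * (1 - πbar (L ω))⁻¹
                  - (1 - A ω) * μ0 (L ω) * (1 - πbar (L ω))⁻¹)) ∂P
            = ∫ ω, ((μ1 (L ω) - μ0 (L ω))
              + (A ω * Y ω * (πbar (L ω))⁻¹ - A ω * μ1 (L ω) * (πbar (L ω))⁻¹)) ∂P
            - ∫ ω, ((1 - A ω) * Y ω * (1 - πbar (L ω))⁻¹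
                  - (1 - A ω) * μ0 (L ω) * (1 - πbar (L ω))⁻¹) ∂P :=
          integral_sub ((i1.sub i2).add (i3.sub i4)) (i5.sub i6)
        have hs2 : ∫ ω, ((μ1 (L ω) - μ0 (L ω))
              + (A ω * Y ω * (πbar (L ω))⁻¹ - A ω * μ1 (L ω) * (πbar (L ω))⁻¹)) ∂P
            = ∫ ω, (μ1 (L ω) - μ0 (L ω)) ∂P
            + ∫ ω, (A ω * Y ω * (πbar (L ω))⁻¹ - A ω * μ1 (L ω) * (πbar (L ω))⁻¹) ∂P :=
          integral_add (i1.sub i2) (i3.sub i4)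
        have hs3 : ∫ ω, (μ1 (L ω) - μ0 (L ω)) ∂P
            = ∫ ω, μ1 (L ω) ∂P - ∫ ω, μ0 (L ω) ∂P := integral_sub i1 i2
        have hs4 : ∫ ω, (A ω * Y ω * (πbar (L ω))⁻¹ - A ω * μ1 (L ω) * (πbar (L ω))⁻¹) ∂P
            = ∫ ω, A ω * Y ω * (πbar (L ω))⁻¹ ∂P
            - ∫ ω, A ω * μ1 (L ω) * (πbar (L ω))⁻¹ ∂P := integral_sub i3 i4
        have hs5 : ∫ ω, ((1 - A ω) * Y ω * (1 - πbar (L ω))⁻¹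
              - (1 - A ω) * μ0 (L ω) * (1 - πbar (L ω))⁻¹) ∂P
            = ∫ ω, (1 - A ω) * Y ω * (1 - πbar (L ω))⁻¹ ∂P
            - ∫ ω, (1 - A ω) * μ0 (L ω) * (1 - πbar (L ω))⁻¹ ∂P := integral_sub i5 i6
        have hs6 : ∫ ω, (Y1 ω - Y0 ω) ∂P = ∫ ω, Y1 ω ∂P - ∫ ω, Y0 ω ∂P :=
          integral_sub hY1int hY0int
        rw [hs1, hs2, hs3, hs4, hs5, hs6, E1, E0, Z1, Z0]
        ring
end

section
/- Double robustness with respect to the outcome regression: if the propensity score π is correctly specified, then for ANY bounded measurable functions μ̄(1,·), μ̄(0,·) : 𝓛 → ℝ (possibly different from the true outcome regressions), the augmented estimating function remains unbiased for the average treatment effect: E[μ̄(1,L) − μ̄(0,L) + (A/π(L))·(Y − μ̄(1,L)) − ((1−A)/(1−π(L)))·(Y − μ̄(0,L))] = E[Y¹ − Y⁰]. -/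
open MeasureTheory ProbabilityTheory

lemma aux_indep_condexp_mul
    {Ω : Type*} {m : MeasurableSpace Ω} [mΩ : MeasurableSpace Ω] [StandardBorelSpace Ω]
    (P : Measure Ω) [IsProbabilityMeasure P] (hm : m ≤ mΩ)
    (f B : Ω → ℝ) (hf : Measurable f) (hf_int : Integrable f P)
    (hB : Measurable B) (hB01 : ∀ ω, B ω = 0 ∨ B ω = 1)
    (hind : CondIndepFun m hm f B P) :
    P[fun ω => B ω * f ω | m] =ᵐ[P] fun ω => (P[B|m]) ω * (P[f|m]) ω := by
  set κ := condExpKernel (mΩ := mΩ) P m with hκ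
  set T := B ⁻¹' {1} with hT_def
  have hT : MeasurableSet T := hB (measurableSet_singleton 1)
  have hBind : ∀ ω, B ω = T.indicator (fun _ => (1:ℝ)) ω := by
    intro ω
    rcases hB01 ω with h | h <;>
      simp [Set.indicator_apply, hT_def, Set.mem_preimage, h]
  have hB_int : Integrable B P := by
    refine Integrable.mono' (integrable_const 1) hB.aestronglyMeasurable ?_
    filter_upwards with ω
    rcases hB01 ω with h | h <;> simp [h]
  have hBf_int : Integrable (fun ω => B ω * f ω) P := by
    refine Integrable.mono' hf_int.abs (hB.mul hf).aestronglyMeasurable ?_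
    filter_upwards with ω
    rcases hB01 ω with h | h <;> simp [h, abs_mul, abs_nonneg]
  have hind' : Kernel.IndepFun f B (condExpKernel (mΩ := mΩ) P m) (P.trim hm) := hind
  have hkey : ∀ᵐ ω ∂P, ∀ q : ℚ,
      κ ω (f ⁻¹' Set.Iic (q:ℝ) ∩ T) = κ ω (f ⁻¹' Set.Iic (q:ℝ)) * κ ω T := by
    rw [ae_all_iff]
    intro q
    exact ae_of_ae_trim hm
      (hind'.measure_inter_preimage_eq_mul _ _ measurableSet_Iic (measurableSet_singleton 1))
  have hfk : ∀ᵐ ω ∂P, Integrable f (κ ω) := hf_int.condExpKernel_ae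
  have h1 := condExp_ae_eq_integral_condExpKernel hm hBf_int
  have h2 := condExp_ae_eq_integral_condExpKernel hm hB_int
  have h3 := condExp_ae_eq_integral_condExpKernel hm hf_int
  filter_upwards [hkey, hfk, h1, h2, h3] with ω hkeyω hfkω h1ω h2ω h3ω
  rw [h1ω, h2ω, h3ω]
  set ν := κ ω with hν
  haveI : IsProbabilityMeasure ν := IsMarkovKernel.isProbabilityMeasure ω
  have hBint : ∫ y, B y ∂ν = (ν T).toReal := by
    simp_rw [hBind]
    rw [integral_indicator_const (1:ℝ) hT]
    simp
    rfl
  haveI hfin1 : IsFiniteMeasure ((ν.restrict T).map f) := by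
    constructor
    rw [Measure.map_apply hf MeasurableSet.univ]
    exact measure_lt_top _ _
  haveI hfin2 : IsFiniteMeasure ((ν T) • ν.map f) := by
    constructor
    rw [Measure.smul_apply, smul_eq_mul, Measure.map_apply hf MeasurableSet.univ]
    exact ENNReal.mul_lt_top (measure_lt_top _ _) (measure_lt_top _ _)
  have hmeq : (ν.restrict T).map f = (ν T) • ν.map f := by
    refine ext_of_generate_finite _
      ((BorelSpace.measurable_eq (α := ℝ)).trans Real.borel_eq_generateFrom_Iic_rat)
      Real.isPiSystem_Iic_rat ?_ ?_
    · intro s hs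
      rw [Set.mem_iUnion] at hs
      obtain ⟨q, hq⟩ := hs
      rw [Set.mem_singleton_iff] at hq
      subst hq
      rw [Measure.map_apply hf measurableSet_Iic, Measure.smul_apply,
        Measure.map_apply hf measurableSet_Iic,
        Measure.restrict_apply (hf measurableSet_Iic), smul_eq_mul, mul_comm]
      exact hkeyω q
    · rw [Measure.map_apply hf MeasurableSet.univ, Measure.smul_apply,
        Measure.map_apply hf MeasurableSet.univ, Set.preimage_univ,
        Measure.restrict_apply MeasurableSet.univ, Set.univ_inter, smul_eq_mul,
        measure_univ, mul_one]
  have hrestr : ∫ y in T, f y ∂ν = (ν T).toReal * ∫ y, f y ∂ν := by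
    have e1 : ∫ y in T, f y ∂ν = ∫ x, x ∂((ν.restrict T).map f) :=
      (integral_map hf.aemeasurable aestronglyMeasurable_id).symm
    have e2 : ∫ x, x ∂(ν.map f) = ∫ y, f y ∂ν :=
      integral_map hf.aemeasurable aestronglyMeasurable_id
    rw [e1, hmeq, integral_smul_measure, e2, smul_eq_mul]
  calc ∫ y, B y * f y ∂ν = ∫ y, T.indicator f y ∂ν := by
        refine integral_congr_ae (Filter.Eventually.of_forall fun y => ?_)
        rcases hB01 y with h | h <;>
          simp [Set.indicator_apply, hT_def, Set.mem_preimage, h]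
    _ = ∫ y in T, f y ∂ν := integral_indicator hT
    _ = (ν T).toReal * ∫ y, f y ∂ν := hrestr
    _ = (∫ y, B y ∂ν) * ∫ y, f y ∂ν := by rw [hBint]

open MeasureTheory ProbabilityTheory

lemma aux_integral_mul_condexp
    {Ω : Type*} {m : MeasurableSpace Ω} [mΩ : MeasurableSpace Ω]
    (P : Measure Ω) [IsProbabilityMeasure P] (hm : m ≤ mΩ)
    (f g : Ω → ℝ) (hf : StronglyMeasurable[m] f) (c : ℝ) (hfb : ∀ᵐ ω ∂P, ‖f ω‖ ≤ c)
    (hg : Integrable g P) :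
    ∫ ω, f ω * g ω ∂P = ∫ ω, f ω * (P[g|m]) ω ∂P := by
  have h := condExp_stronglyMeasurable_mul_of_bound hm hf hg c hfb
  calc ∫ ω, f ω * g ω ∂P = ∫ ω, (P[f * g|m]) ω ∂P := (integral_condExp hm).symm
    _ = ∫ ω, f ω * (P[g|m]) ω ∂P := integral_congr_ae h

lemma aux_dr
    {Ω : Type*} {m : MeasurableSpace Ω} [mΩ : MeasurableSpace Ω] [StandardBorelSpace Ω]
    (P : Measure Ω) [IsProbabilityMeasure P]
    {𝓛 : Type*} [MeasurableSpace 𝓛]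
    (L : Ω → 𝓛) (hL : Measurable L) (hm : m ≤ mΩ) (hLm : Measurable[m] L)
    (A : Ω → ℝ) (hA : Measurable A) (hA01 : ∀ ω, A ω = 0 ∨ A ω = 1)
    (Y Y0 Y1 : Ω → ℝ) (hY : Measurable Y) (hY0 : Measurable Y0) (hY1 : Measurable Y1)
    (C : ℝ) (hYb : ∀ᵐ ω ∂P, |Y ω| ≤ C) (hY0b : ∀ᵐ ω ∂P, |Y0 ω| ≤ C)
    (hY1b : ∀ᵐ ω ∂P, |Y1 ω| ≤ C)
    (hcons : ∀ᵐ ω ∂P, Y ω = A ω * Y1 ω + (1 - A ω) * Y0 ω)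
    (hNUC : CondIndepFun m hm (fun ω => (Y0 ω, Y1 ω)) A P)
    (ε : ℝ) (hε : ε ∈ Set.Ioo (0 : ℝ) (1 / 2))
    (π : 𝓛 → ℝ) (hπ : Measurable π)
    (hπver : (fun ω => π (L ω)) =ᵐ[P] P[A | m])
    (hπbd : ∀ᵐ ω ∂P, ε ≤ π (L ω) ∧ π (L ω) ≤ 1 - ε)
    (μbar1 μbar0 : 𝓛 → ℝ) (hμbar1 : Measurable μbar1) (hμbar0 : Measurable μbar0)
    (Cbar : ℝ) (hμbar1b : ∀ ℓ, |μbar1 ℓ| ≤ Cbar) (hμbar0b : ∀ ℓ, |μbar0 ℓ| ≤ Cbar) :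
    ∫ ω, (μbar1 (L ω) - μbar0 (L ω)
        + (A ω / π (L ω)) * (Y ω - μbar1 (L ω))
        - ((1 - A ω) / (1 - π (L ω))) * (Y ω - μbar0 (L ω))) ∂P
      = ∫ ω, (Y1 ω - Y0 ω) ∂P := by
  -- integrability helper
  have bdd_int : ∀ (h : Ω → ℝ), Measurable h → ∀ (c : ℝ), (∀ᵐ ω ∂P, |h ω| ≤ c) →
      Integrable h P := fun h hh c hc =>
    Integrable.mono' (integrable_const c) hh.aestronglyMeasurable (by simpa using hc)
  have hΩ : Nonempty Ω := by
    rcases isEmpty_or_nonempty Ω with h | h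
    · exfalso
      have h1 : P Set.univ = 1 := measure_univ
      rw [Set.univ_eq_empty_iff.mpr h, measure_empty] at h1
      exact zero_ne_one h1
    · exact h
  haveI : Nonempty 𝓛 := ⟨L hΩ.some⟩
  haveI : (MeasureTheory.ae P).NeBot := ae_neBot.2 (IsProbabilityMeasure.ne_zero P)
  have hC0 : 0 ≤ C := by
    obtain ⟨ω, hω⟩ := hY1b.exists
    exact (abs_nonneg _).trans hω
  have hCbar0 : 0 ≤ Cbar := (abs_nonneg _).trans (hμbar1b Classical.ofNonempty)
  have hAb : ∀ ω, |A ω| ≤ 1 := by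
    intro ω; rcases hA01 ω with h | h <;> simp [h]
  have hBb : ∀ ω, |1 - A ω| ≤ 1 := by
    intro ω; rcases hA01 ω with h | h <;> simp [h]
  have hA_int : Integrable A P := bdd_int A hA 1 (Filter.Eventually.of_forall hAb)
  have hY1_int : Integrable Y1 P := bdd_int Y1 hY1 C hY1b
  have hY0_int : Integrable Y0 P := bdd_int Y0 hY0 C hY0b
  have hε0 : (0:ℝ) < ε := hε.1
  have hε1 : ε ≤ 1 - ε := by have := hε.2; linarith
  -- truncated propensity score
  set πc : 𝓛 → ℝ := fun ℓ => max ε (min (π ℓ) (1 - ε)) with hπc_def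
  have hπc_meas : Measurable πc := measurable_const.max (hπ.min measurable_const)
  have hπc_lb : ∀ ℓ, ε ≤ πc ℓ := fun ℓ => le_max_left _ _
  have hπc_ub : ∀ ℓ, πc ℓ ≤ 1 - ε := fun ℓ => max_le hε1 (min_le_right _ _)
  have hπc_pos : ∀ ℓ, 0 < πc ℓ := fun ℓ => lt_of_lt_of_le hε0 (hπc_lb ℓ)
  have hρc_pos : ∀ ℓ, 0 < 1 - πc ℓ := fun ℓ => by have := hπc_ub ℓ; linarith
  have hπc_ae : ∀ᵐ ω ∂P, πc (L ω) = π (L ω) := by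
    filter_upwards [hπbd] with ω hω
    rw [hπc_def]
    simp only
    rw [min_eq_left hω.2, max_eq_right hω.1]
  -- conditional independence of Y1 and A, Y0 and (1 - A)
  have hciY1 : CondIndepFun m hm Y1 A P := by
    have h := hNUC.comp measurable_snd measurable_id
    exact h
  have hciY0 : CondIndepFun m hm Y0 (fun ω => 1 - A ω) P := by
    have h := hNUC.comp measurable_fst (show Measurable (fun x : ℝ => 1 - x) from measurable_const.sub measurable_id)
    exact h
  -- conditional expectation products
  have hmulY1 : P[fun ω => A ω * Y1 ω | m] =ᵐ[P]
      fun ω => (P[A|m]) ω * (P[Y1|m]) ω :=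
    aux_indep_condexp_mul P hm Y1 A hY1 hY1_int hA hA01 hciY1
  have hB01 : ∀ ω, (1 - A ω) = 0 ∨ (1 - A ω) = 1 := by
    intro ω; rcases hA01 ω with h | h <;> simp [h]
  have hmulY0 : P[fun ω => (1 - A ω) * Y0 ω | m] =ᵐ[P]
      fun ω => (P[fun ω => 1 - A ω|m]) ω * (P[Y0|m]) ω :=
    aux_indep_condexp_mul P hm Y0 (fun ω => 1 - A ω) hY0 hY0_int
      (measurable_const.sub hA) hB01 hciY0
  -- condexp of 1 - A
  have hBver : P[fun ω => 1 - A ω | m] =ᵐ[P] fun ω => 1 - π (L ω) := by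
    have h1 : P[fun ω => 1 - A ω | m] =ᵐ[P] P[fun _ => (1:ℝ)|m] - P[A|m] :=
      condExp_sub (integrable_const 1) hA_int m
    have h2 : P[fun _ => (1:ℝ)|m] = fun _ => (1:ℝ) := condExp_const hm 1
    filter_upwards [h1, hπver] with ω hω hπω
    rw [hω, h2]
    simp [hπω]
  -- Step (1): ∫ B * Yb * (1/w(L)) = ∫ Yb  (two instances)
  have key1 : ∫ ω, A ω * Y1 ω * (1 / πc (L ω)) ∂P = ∫ ω, Y1 ω ∂P := by
    have hfm : StronglyMeasurable[m] fun ω => 1 / πc (L ω) :=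
      Measurable.stronglyMeasurable ((measurable_const.div hπc_meas).comp hLm)
    have hAY1_int : Integrable (fun ω => A ω * Y1 ω) P := by
      refine bdd_int _ (hA.mul hY1) C ?_
      filter_upwards [hY1b] with ω hω
      calc |A ω * Y1 ω| = |A ω| * |Y1 ω| := abs_mul _ _
        _ ≤ 1 * C := by
            refine mul_le_mul (hAb ω) hω (abs_nonneg _) zero_le_one
        _ = C := one_mul C
    have step := aux_integral_mul_condexp P hm (fun ω => 1 / πc (L ω))
      (fun ω => A ω * Y1 ω) hfm (1/ε) ?_ hAY1_int
    · calc ∫ ω, A ω * Y1 ω * (1 / πc (L ω)) ∂P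
          = ∫ ω, (1 / πc (L ω)) * (A ω * Y1 ω) ∂P := by
            refine integral_congr_ae (Filter.Eventually.of_forall fun ω => ?_); ring
        _ = ∫ ω, (1 / πc (L ω)) * (P[fun ω => A ω * Y1 ω|m]) ω ∂P := step
        _ = ∫ ω, (P[Y1|m]) ω ∂P := by
            refine integral_congr_ae ?_
            filter_upwards [hmulY1, hπver, hπc_ae] with ω h1 h2 h3
            rw [h1, ← h2, ← h3, one_div, ← mul_assoc,
              inv_mul_cancel₀ (ne_of_gt (hπc_pos (L ω))), one_mul]
        _ = ∫ ω, Y1 ω ∂P := integral_condExp hm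
    · refine Filter.Eventually.of_forall fun ω => ?_
      rw [Real.norm_eq_abs, abs_of_pos (by positivity)]
      exact one_div_le_one_div_of_le hε0 (hπc_lb (L ω))
  have key0 : ∫ ω, (1 - A ω) * Y0 ω * (1 / (1 - πc (L ω))) ∂P = ∫ ω, Y0 ω ∂P := by
    have hfm : StronglyMeasurable[m] fun ω => 1 / (1 - πc (L ω)) :=
      Measurable.stronglyMeasurable
        ((measurable_const.div (measurable_const.sub hπc_meas)).comp hLm)
    have hBY0_int : Integrable (fun ω => (1 - A ω) * Y0 ω) P := by
      refine bdd_int _ ((measurable_const.sub hA).mul hY0) C ?_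
      filter_upwards [hY0b] with ω hω
      calc |(1 - A ω) * Y0 ω| = |1 - A ω| * |Y0 ω| := abs_mul _ _
        _ ≤ 1 * C := by
            refine mul_le_mul (hBb ω) hω (abs_nonneg _) zero_le_one
        _ = C := one_mul C
    have step := aux_integral_mul_condexp P hm (fun ω => 1 / (1 - πc (L ω)))
      (fun ω => (1 - A ω) * Y0 ω) hfm (1/ε) ?_ hBY0_int
    · calc ∫ ω, (1 - A ω) * Y0 ω * (1 / (1 - πc (L ω))) ∂P
          = ∫ ω, (1 / (1 - πc (L ω))) * ((1 - A ω) * Y0 ω) ∂P := by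
            refine integral_congr_ae (Filter.Eventually.of_forall fun ω => ?_); ring
        _ = ∫ ω, (1 / (1 - πc (L ω))) * (P[fun ω => (1 - A ω) * Y0 ω|m]) ω ∂P := step
        _ = ∫ ω, (P[Y0|m]) ω ∂P := by
            refine integral_congr_ae ?_
            filter_upwards [hmulY0, hBver, hπc_ae] with ω h1 h2 h3
            rw [h1, h2, ← h3, one_div, ← mul_assoc,
              inv_mul_cancel₀ (ne_of_gt (hρc_pos (L ω))), one_mul]
        _ = ∫ ω, Y0 ω ∂P := integral_condExp hm
    · refine Filter.Eventually.of_forall fun ω => ?_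
      rw [Real.norm_eq_abs, abs_of_pos (one_div_pos.mpr (hρc_pos (L ω)))]
      have h := hπc_ub (L ω)
      have : ε ≤ 1 - πc (L ω) := by linarith
      exact one_div_le_one_div_of_le hε0 this
  -- Step (2): ∫ B * φ(L) * (1/w(L)) = ∫ φ(L)  (two instances)
  have key2 : ∀ (φ : 𝓛 → ℝ), Measurable φ → ∀ (Cφ : ℝ), (∀ ℓ, |φ ℓ| ≤ Cφ) →
      ∫ ω, A ω * φ (L ω) * (1 / πc (L ω)) ∂P = ∫ ω, φ (L ω) ∂P := by
    intro φ hφ Cφ hφb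
    have hCφ0 : 0 ≤ Cφ := le_trans (abs_nonneg _) (hφb Classical.ofNonempty)
    have hfm : StronglyMeasurable[m] fun ω => φ (L ω) / πc (L ω) :=
      Measurable.stronglyMeasurable ((hφ.div hπc_meas).comp hLm)
    have step := aux_integral_mul_condexp P hm (fun ω => φ (L ω) / πc (L ω))
      A hfm (Cφ/ε) ?_ hA_int
    · calc ∫ ω, A ω * φ (L ω) * (1 / πc (L ω)) ∂P
          = ∫ ω, (φ (L ω) / πc (L ω)) * A ω ∂P := by
            refine integral_congr_ae (Filter.Eventually.of_forall fun ω => ?_); ring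
        _ = ∫ ω, (φ (L ω) / πc (L ω)) * (P[A|m]) ω ∂P := step
        _ = ∫ ω, φ (L ω) ∂P := by
            refine integral_congr_ae ?_
            filter_upwards [hπver, hπc_ae] with ω h2 h3
            rw [← h2, ← h3, div_mul_cancel₀ _ (ne_of_gt (hπc_pos (L ω)))]
    · refine Filter.Eventually.of_forall fun ω => ?_
      rw [Real.norm_eq_abs, abs_div, abs_of_pos (hπc_pos (L ω))]
      exact div_le_div₀ hCφ0 (hφb _) hε0 (hπc_lb _)
  have key2' : ∀ (φ : 𝓛 → ℝ), Measurable φ → ∀ (Cφ : ℝ), (∀ ℓ, |φ ℓ| ≤ Cφ) →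
      ∫ ω, (1 - A ω) * φ (L ω) * (1 / (1 - πc (L ω))) ∂P = ∫ ω, φ (L ω) ∂P := by
    intro φ hφ Cφ hφb
    have hCφ0 : 0 ≤ Cφ := le_trans (abs_nonneg _) (hφb Classical.ofNonempty)
    have hB_int : Integrable (fun ω => 1 - A ω) P :=
      bdd_int _ (measurable_const.sub hA) 1 (Filter.Eventually.of_forall hBb)
    have hfm : StronglyMeasurable[m] fun ω => φ (L ω) / (1 - πc (L ω)) :=
      Measurable.stronglyMeasurable
        ((hφ.div (measurable_const.sub hπc_meas)).comp hLm)
    have step := aux_integral_mul_condexp P hm (fun ω => φ (L ω) / (1 - πc (L ω)))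
      (fun ω => 1 - A ω) hfm (Cφ/ε) ?_ hB_int
    · calc ∫ ω, (1 - A ω) * φ (L ω) * (1 / (1 - πc (L ω))) ∂P
          = ∫ ω, (φ (L ω) / (1 - πc (L ω))) * (1 - A ω) ∂P := by
            refine integral_congr_ae (Filter.Eventually.of_forall fun ω => ?_); ring
        _ = ∫ ω, (φ (L ω) / (1 - πc (L ω))) * (P[fun ω => 1 - A ω|m]) ω ∂P := step
        _ = ∫ ω, φ (L ω) ∂P := by
            refine integral_congr_ae ?_
            filter_upwards [hBver, hπc_ae] with ω h2 h3
            rw [h2, ← h3, div_mul_cancel₀ _ (ne_of_gt (hρc_pos (L ω)))]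
    · refine Filter.Eventually.of_forall fun ω => ?_
      rw [Real.norm_eq_abs, abs_div, abs_of_pos (hρc_pos (L ω))]
      have h := hπc_ub (L ω)
      exact div_le_div₀ hCφ0 (hφb _) hε0 (by linarith)
  -- consistency rewrites
  have hconsA : ∀ᵐ ω ∂P, A ω * Y ω = A ω * Y1 ω := by
    filter_upwards [hcons] with ω hω
    rcases hA01 ω with h | h <;> rw [hω] <;> rw [h] <;> ring
  have hconsB : ∀ᵐ ω ∂P, (1 - A ω) * Y ω = (1 - A ω) * Y0 ω := by
    filter_upwards [hcons] with ω hω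
    rcases hA01 ω with h | h <;> rw [hω] <;> rw [h] <;> ring
  have habs1 : ∀ᵐ ω ∂P, |A ω * Y1 ω * (1 / πc (L ω))| ≤ C * (1/ε) := by
    filter_upwards [hY1b] with ω hω
    calc |A ω * Y1 ω * (1 / πc (L ω))| = |A ω| * |Y1 ω| * |1 / πc (L ω)| := by
          rw [abs_mul, abs_mul]
      _ ≤ 1 * C * (1/ε) := by
          have h2 : |1 / πc (L ω)| ≤ 1/ε := by
            rw [abs_of_pos (by positivity)]
            exact one_div_le_one_div_of_le hε0 (hπc_lb _)
          refine mul_le_mul (mul_le_mul (hAb ω) hω (abs_nonneg _) zero_le_one) h2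
            (abs_nonneg _) (by positivity)
      _ = C * (1/ε) := by ring
  have habs0 : ∀ᵐ ω ∂P, |(1 - A ω) * Y0 ω * (1 / (1 - πc (L ω)))| ≤ C * (1/ε) := by
    filter_upwards [hY0b] with ω hω
    calc |(1 - A ω) * Y0 ω * (1 / (1 - πc (L ω)))|
        = |1 - A ω| * |Y0 ω| * |1 / (1 - πc (L ω))| := by rw [abs_mul, abs_mul]
      _ ≤ 1 * C * (1/ε) := by
          have h2 : |1 / (1 - πc (L ω))| ≤ 1/ε := by
            rw [abs_of_pos (one_div_pos.mpr (hρc_pos (L ω)))]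
            exact one_div_le_one_div_of_le hε0 (by have := hπc_ub (L ω); linarith)
          refine mul_le_mul (mul_le_mul (hBb ω) hω (abs_nonneg _) zero_le_one) h2
            (abs_nonneg _) (by positivity)
      _ = C * (1/ε) := by ring
  have habs1' : ∀ᵐ ω ∂P, |A ω * μbar1 (L ω) * (1 / πc (L ω))| ≤ Cbar * (1/ε) := by
    filter_upwards with ω
    calc |A ω * μbar1 (L ω) * (1 / πc (L ω))|
        = |A ω| * |μbar1 (L ω)| * |1 / πc (L ω)| := by rw [abs_mul, abs_mul]
      _ ≤ 1 * Cbar * (1/ε) := by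
          have h2 : |1 / πc (L ω)| ≤ 1/ε := by
            rw [abs_of_pos (by positivity)]
            exact one_div_le_one_div_of_le hε0 (hπc_lb _)
          refine mul_le_mul (mul_le_mul (hAb ω) (hμbar1b _) (abs_nonneg _) zero_le_one) h2
            (abs_nonneg _) (by positivity)
      _ = Cbar * (1/ε) := by ring
  have habs0' : ∀ᵐ ω ∂P, |(1 - A ω) * μbar0 (L ω) * (1 / (1 - πc (L ω)))| ≤ Cbar * (1/ε) := by
    filter_upwards with ω
    calc |(1 - A ω) * μbar0 (L ω) * (1 / (1 - πc (L ω)))|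
        = |1 - A ω| * |μbar0 (L ω)| * |1 / (1 - πc (L ω))| := by rw [abs_mul, abs_mul]
      _ ≤ 1 * Cbar * (1/ε) := by
          have h2 : |1 / (1 - πc (L ω))| ≤ 1/ε := by
            rw [abs_of_pos (one_div_pos.mpr (hρc_pos (L ω)))]
            exact one_div_le_one_div_of_le hε0 (by have := hπc_ub (L ω); linarith)
          refine mul_le_mul (mul_le_mul (hBb ω) (hμbar0b _) (abs_nonneg _) zero_le_one) h2
            (abs_nonneg _) (by positivity)
      _ = Cbar * (1/ε) := by ring
  have int11 : Integrable (fun ω => A ω * Y1 ω * (1 / πc (L ω))) P :=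
    bdd_int _ ((hA.mul hY1).mul (measurable_const.div (hπc_meas.comp hL))) _ habs1
  have int12 : Integrable (fun ω => A ω * μbar1 (L ω) * (1 / πc (L ω))) P :=
    bdd_int _ ((hA.mul (hμbar1.comp hL)).mul (measurable_const.div (hπc_meas.comp hL))) _ habs1'
  have int01 : Integrable (fun ω => (1 - A ω) * Y0 ω * (1 / (1 - πc (L ω)))) P :=
    bdd_int _ (((measurable_const.sub hA).mul hY0).mul
      (measurable_const.div (measurable_const.sub (hπc_meas.comp hL)))) _ habs0
  have int02 : Integrable (fun ω => (1 - A ω) * μbar0 (L ω) * (1 / (1 - πc (L ω)))) P :=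
    bdd_int _ (((measurable_const.sub hA).mul (hμbar0.comp hL)).mul
      (measurable_const.div (measurable_const.sub (hπc_meas.comp hL)))) _ habs0'
  have hbar1_int : Integrable (fun ω => μbar1 (L ω)) P :=
    bdd_int _ (hμbar1.comp hL) Cbar (Filter.Eventually.of_forall fun ω => hμbar1b _)
  have hbar0_int : Integrable (fun ω => μbar0 (L ω)) P :=
    bdd_int _ (hμbar0.comp hL) Cbar (Filter.Eventually.of_forall fun ω => hμbar0b _)
  -- the three pieces
  have hI2 : ∫ ω, (A ω / π (L ω)) * (Y ω - μbar1 (L ω)) ∂P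
      = ∫ ω, Y1 ω ∂P - ∫ ω, μbar1 (L ω) ∂P := by
    have e1 : ∫ ω, (A ω / π (L ω)) * (Y ω - μbar1 (L ω)) ∂P
        = ∫ ω, (A ω * Y1 ω * (1 / πc (L ω)) - A ω * μbar1 (L ω) * (1 / πc (L ω))) ∂P := by
      refine integral_congr_ae ?_
      filter_upwards [hπc_ae, hconsA] with ω h3 hc
      rw [← h3]
      calc (A ω / πc (L ω)) * (Y ω - μbar1 (L ω))
          = (A ω * Y ω - A ω * μbar1 (L ω)) * (1 / πc (L ω)) := by ring
        _ = (A ω * Y1 ω - A ω * μbar1 (L ω)) * (1 / πc (L ω)) := by rw [hc]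
        _ = A ω * Y1 ω * (1 / πc (L ω)) - A ω * μbar1 (L ω) * (1 / πc (L ω)) := by ring
    rw [e1, integral_sub int11 int12, key1, key2 μbar1 hμbar1 Cbar hμbar1b]
  have hI3 : ∫ ω, ((1 - A ω) / (1 - π (L ω))) * (Y ω - μbar0 (L ω)) ∂P
      = ∫ ω, Y0 ω ∂P - ∫ ω, μbar0 (L ω) ∂P := by
    have e1 : ∫ ω, ((1 - A ω) / (1 - π (L ω))) * (Y ω - μbar0 (L ω)) ∂P
        = ∫ ω, ((1 - A ω) * Y0 ω * (1 / (1 - πc (L ω)))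
            - (1 - A ω) * μbar0 (L ω) * (1 / (1 - πc (L ω)))) ∂P := by
      refine integral_congr_ae ?_
      filter_upwards [hπc_ae, hconsB] with ω h3 hc
      rw [← h3]
      calc ((1 - A ω) / (1 - πc (L ω))) * (Y ω - μbar0 (L ω))
          = ((1 - A ω) * Y ω - (1 - A ω) * μbar0 (L ω)) * (1 / (1 - πc (L ω))) := by ring
        _ = ((1 - A ω) * Y0 ω - (1 - A ω) * μbar0 (L ω)) * (1 / (1 - πc (L ω))) := by rw [hc]
        _ = (1 - A ω) * Y0 ω * (1 / (1 - πc (L ω)))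
            - (1 - A ω) * μbar0 (L ω) * (1 / (1 - πc (L ω))) := by ring
    rw [e1, integral_sub int01 int02, key0, key2' μbar0 hμbar0 Cbar hμbar0b]
  -- integrability of the full pieces
  have hf2int : Integrable (fun ω => (A ω / π (L ω)) * (Y ω - μbar1 (L ω))) P := by
    refine bdd_int _ ((hA.div (hπ.comp hL)).mul (hY.sub (hμbar1.comp hL))) ((1/ε) * (C + Cbar)) ?_
    filter_upwards [hπbd, hYb] with ω hπω hYω
    have hπpos : 0 < π (L ω) := lt_of_lt_of_le hε0 hπω.1
    calc |(A ω / π (L ω)) * (Y ω - μbar1 (L ω))|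
        = |A ω| / |π (L ω)| * |Y ω - μbar1 (L ω)| := by rw [abs_mul, abs_div]
      _ ≤ (1/ε) * (C + Cbar) := by
          refine mul_le_mul ?_ ?_ (abs_nonneg _) (by positivity)
          · refine div_le_div₀ zero_le_one (hAb ω) hε0 ?_
            rw [abs_of_pos hπpos]; exact hπω.1
          · rw [sub_eq_add_neg]
            refine (abs_add_le _ _).trans ?_
            rw [abs_neg]
            exact add_le_add hYω (hμbar1b _)
  have hf3int : Integrable (fun ω => ((1 - A ω) / (1 - π (L ω))) * (Y ω - μbar0 (L ω))) P := by
    refine bdd_int _ (((measurable_const.sub hA).div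
      (measurable_const.sub (hπ.comp hL))).mul (hY.sub (hμbar0.comp hL))) ((1/ε) * (C + Cbar)) ?_
    filter_upwards [hπbd, hYb] with ω hπω hYω
    have hπpos : 0 < 1 - π (L ω) := by have := hπω.2; linarith
    calc |((1 - A ω) / (1 - π (L ω))) * (Y ω - μbar0 (L ω))|
        = |1 - A ω| / |1 - π (L ω)| * |Y ω - μbar0 (L ω)| := by rw [abs_mul, abs_div]
      _ ≤ (1/ε) * (C + Cbar) := by
          refine mul_le_mul ?_ ?_ (abs_nonneg _) (by positivity)
          · refine div_le_div₀ zero_le_one (hBb ω) hε0 ?_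
            rw [abs_of_pos hπpos]
            have := hπω.2; linarith
          · rw [sub_eq_add_neg]
            refine (abs_add_le _ _).trans ?_
            rw [abs_neg]
            exact add_le_add hYω (hμbar0b _)
  have hf1int : Integrable (fun ω => μbar1 (L ω) - μbar0 (L ω)) P := hbar1_int.sub hbar0_int
  -- put everything together
  have h12 : Integrable (fun ω => (μbar1 (L ω) - μbar0 (L ω))
      + (A ω / π (L ω)) * (Y ω - μbar1 (L ω))) P := hf1int.add hf2int
  have hsum : ∫ ω, ((μbar1 (L ω) - μbar0 (L ω))
        + (A ω / π (L ω)) * (Y ω - μbar1 (L ω))) ∂P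
      = ∫ ω, (μbar1 (L ω) - μbar0 (L ω)) ∂P
        + ∫ ω, (A ω / π (L ω)) * (Y ω - μbar1 (L ω)) ∂P := integral_add hf1int hf2int
  have hsplit : ∫ ω, (μbar1 (L ω) - μbar0 (L ω)
        + (A ω / π (L ω)) * (Y ω - μbar1 (L ω))
        - ((1 - A ω) / (1 - π (L ω))) * (Y ω - μbar0 (L ω))) ∂P
      = (∫ ω, (μbar1 (L ω) - μbar0 (L ω)) ∂P
        + ∫ ω, (A ω / π (L ω)) * (Y ω - μbar1 (L ω)) ∂P)
        - ∫ ω, ((1 - A ω) / (1 - π (L ω))) * (Y ω - μbar0 (L ω)) ∂P := by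
    rw [← hsum]
    exact integral_sub h12 hf3int
  have hbarsub : ∫ ω, (μbar1 (L ω) - μbar0 (L ω)) ∂P
      = ∫ ω, μbar1 (L ω) ∂P - ∫ ω, μbar0 (L ω) ∂P := integral_sub hbar1_int hbar0_int
  have hYsub : ∫ ω, (Y1 ω - Y0 ω) ∂P = ∫ ω, Y1 ω ∂P - ∫ ω, Y0 ω ∂P :=
    integral_sub hY1_int hY0_int
  rw [hsplit, hbarsub, hI2, hI3, hYsub]
  ring

/-- Double robustness with respect to the outcome regression: if the
propensity score `π` is correctly specified, then for ANY bounded measurable functions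
`μ̄(1,·), μ̄(0,·) : 𝓛 → ℝ` (possibly different from the true outcome regressions), the
augmented estimating function remains unbiased for the average treatment effect. -/
theorem double_robustness_wrt_outcome_regression
    {Ω : Type*} [MeasurableSpace Ω] [StandardBorelSpace Ω]
    (P : Measure Ω) [IsProbabilityMeasure P]
    {𝓛 : Type*} [MeasurableSpace 𝓛] [StandardBorelSpace 𝓛]
    (L : Ω → 𝓛) (hL : Measurable L)
    (A : Ω → ℝ) (hA : Measurable A) (hA01 : ∀ ω, A ω = 0 ∨ A ω = 1)
    (Y Y0 Y1 : Ω → ℝ) (hY : Measurable Y) (hY0 : Measurable Y0) (hY1 : Measurable Y1)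
    (C : ℝ) (hYb : ∀ᵐ ω ∂P, |Y ω| ≤ C) (hY0b : ∀ᵐ ω ∂P, |Y0 ω| ≤ C)
    (hY1b : ∀ᵐ ω ∂P, |Y1 ω| ≤ C)
    -- consistency
    (hcons : ∀ᵐ ω ∂P, Y ω = A ω * Y1 ω + (1 - A ω) * Y0 ω)
    -- no unmeasured confounding: (Y⁰, Y¹) ⫫ A ∣ σ(L)
    (hNUC : CondIndepFun (MeasurableSpace.comap L inferInstance) hL.comap_le
      (fun ω => (Y0 ω, Y1 ω)) A P)
    -- positivity (correctly specified propensity score)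
    (ε : ℝ) (hε : ε ∈ Set.Ioo (0 : ℝ) (1 / 2))
    (π : 𝓛 → ℝ) (hπ : Measurable π)
    (hπver : (fun ω => π (L ω)) =ᵐ[P] P[A | MeasurableSpace.comap L inferInstance])
    (hπbd : ∀ᵐ ω ∂P, ε ≤ π (L ω) ∧ π (L ω) ≤ 1 - ε)
    -- true outcome regressions
    (μ1 μ0 : 𝓛 → ℝ) (hμ1 : Measurable μ1) (hμ0 : Measurable μ0)
    (Cμ : ℝ) (hμ1b : ∀ ℓ, |μ1 ℓ| ≤ Cμ) (hμ0b : ∀ ℓ, |μ0 ℓ| ≤ Cμ)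
    (hreg1 : ∀ g : 𝓛 → ℝ, Measurable g → (∃ Cg, ∀ ℓ, |g ℓ| ≤ Cg) →
      ∫ ω, A ω * Y ω * g (L ω) ∂P = ∫ ω, A ω * μ1 (L ω) * g (L ω) ∂P)
    (hreg0 : ∀ g : 𝓛 → ℝ, Measurable g → (∃ Cg, ∀ ℓ, |g ℓ| ≤ Cg) →
      ∫ ω, (1 - A ω) * Y ω * g (L ω) ∂P = ∫ ω, (1 - A ω) * μ0 (L ω) * g (L ω) ∂P)
    -- arbitrary (possibly misspecified) bounded outcome regressions
    (μbar1 μbar0 : 𝓛 → ℝ) (hμbar1 : Measurable μbar1) (hμbar0 : Measurable μbar0)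
    (Cbar : ℝ) (hμbar1b : ∀ ℓ, |μbar1 ℓ| ≤ Cbar) (hμbar0b : ∀ ℓ, |μbar0 ℓ| ≤ Cbar) :
    ∫ ω, (μbar1 (L ω) - μbar0 (L ω)
        + (A ω / π (L ω)) * (Y ω - μbar1 (L ω))
        - ((1 - A ω) / (1 - π (L ω))) * (Y ω - μbar0 (L ω))) ∂P
      = ∫ ω, (Y1 ω - Y0 ω) ∂P := by
  exact aux_dr P L hL hL.comap_le (fun s hs => ⟨s, hs, rfl⟩) A hA hA01 Y Y0 Y1 hY hY0 hY1
    C hYb hY0b hY1b hcons hNUC ε hε π hπ hπver hπbd μbar1 μbar0 hμbar1 hμbar0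
    Cbar hμbar1b hμbar0b
end

section
/- (Theorem 3, mean-zero property of the cross-trial influence function.) Under the cross-trial setup, E_P[ (1_{E_j}/P(E_j))·(μ(1,L_j) − μ(0,L_j)) + (1_{E_m}/P(E_m))·ξ(L_m)·( (A/π(L_m))·(Y − μ(1,L_m)) − ((1−A)/(1−π(L_m)))·(Y − μ(0,L_m)) ) ] = χ_{j,m}, where χ_{j,m} := ∫ (μ(1,ℓ) − μ(0,ℓ)) dν(ℓ); equivalently, the influence function χ̇*_{j,m} (the integrand above minus (1_{E_j}/P(E_j))·χ_{j,m}) has mean zero under P. -/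
open MeasureTheory ProbabilityTheory

private lemma integrable_of_bdd' {Ω : Type*} [MeasurableSpace Ω] {P : Measure Ω}
    [IsFiniteMeasure P] {f : Ω → ℝ} (hf : AEStronglyMeasurable f P) {C : ℝ}
    (h : ∀ ω, |f ω| ≤ C) : Integrable f P :=
  Integrable.mono' (integrable_const C) hf (ae_of_all _ fun ω => by
    simpa [Real.norm_eq_abs] using h ω)

private lemma integral_cond_eq' {Ω : Type*} [MeasurableSpace Ω] (P : Measure Ω)
    {E : Set Ω} (hE : MeasurableSet E) (f : Ω → ℝ) :
    ∫ ω, (E.indicator (fun _ => (1:ℝ)) ω / (P E).toReal) * f ω ∂P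
      = ∫ ω, f ω ∂(P[|E]) := by
  have hpt : ∀ ω, (E.indicator (fun _ => (1:ℝ)) ω / (P E).toReal) * f ω
      = (P E).toReal⁻¹ * E.indicator f ω := by
    intro ω
    by_cases h : ω ∈ E <;> simp [h, div_eq_mul_inv, mul_comm]
  rw [ProbabilityTheory.cond, integral_smul_measure, ENNReal.toReal_inv, smul_eq_mul,
    ← integral_indicator hE]
  simp_rw [hpt]
  rw [integral_const_mul]

/-- Theorem 3, mean-zero property of the cross-trial influence function.
`E_P[(1_{E_j}/P(E_j))·(μ(1,L_j) − μ(0,L_j))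
   + (1_{E_m}/P(E_m))·ξ(L_m)·((A/π(L_m))·(Y − μ(1,L_m)) − ((1−A)/(1−π(L_m)))·(Y − μ(0,L_m)))]
 = χ_{j,m} := ∫ (μ(1,ℓ) − μ(0,ℓ)) dν(ℓ)`. -/
theorem cross_trial_influence_function_mean
    {Ω : Type*} [MeasurableSpace Ω]
    (P : Measure Ω) [IsProbabilityMeasure P]
    {𝓛 : Type*} [MeasurableSpace 𝓛] [StandardBorelSpace 𝓛]
    (Ej Em : Set Ω) (hEj : MeasurableSet Ej) (hEm : MeasurableSet Em)
    (hEjpos : 0 < P Ej) (hEmpos : 0 < P Em)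
    (Lj Lm : Ω → 𝓛) (hLj : Measurable Lj) (hLm : Measurable Lm)
    -- ν is the law of L_j given E_j ; ρ is the law of L_m given E_m
    (ν ρ : Measure 𝓛) (hν : ν = (P[|Ej]).map Lj) (hρ : ρ = (P[|Em]).map Lm)
    -- cross-trial overlap: ξ is a bounded version of dν/dρ
    (ξ : 𝓛 → ℝ) (hξ : Measurable ξ) (hξ0 : ∀ ℓ, 0 ≤ ξ ℓ)
    (Cξ : ℝ) (hξb : ∀ ℓ, ξ ℓ ≤ Cξ)
    (hξRN : ∀ B : Set 𝓛, MeasurableSet B → ν B = ∫⁻ ℓ in B, ENNReal.ofReal (ξ ℓ) ∂ρ)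
    (A : Ω → ℝ) (hA : Measurable A) (hA01 : ∀ ω, A ω = 0 ∨ A ω = 1)
    (Y : Ω → ℝ) (hY : Measurable Y) (C : ℝ) (hYb : ∀ ω, |Y ω| ≤ C)
    -- propensity score, under P' = P[|E_m]
    (ε : ℝ) (hε : ε ∈ Set.Ioo (0 : ℝ) (1 / 2))
    (π : 𝓛 → ℝ) (hπ : Measurable π)
    (hπver : (fun ω => π (Lm ω)) =ᵐ[P[|Em]]
      (P[|Em])[A | MeasurableSpace.comap Lm inferInstance])
    (hπbd : ∀ᵐ ω ∂(P[|Em]), ε ≤ π (Lm ω) ∧ π (Lm ω) ≤ 1 - ε)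
    -- outcome regressions, under P' = P[|E_m]
    (μ1 μ0 : 𝓛 → ℝ) (hμ1 : Measurable μ1) (hμ0 : Measurable μ0)
    (Cμ : ℝ) (hμ1b : ∀ ℓ, |μ1 ℓ| ≤ Cμ) (hμ0b : ∀ ℓ, |μ0 ℓ| ≤ Cμ)
    (hreg1 : ∀ g : 𝓛 → ℝ, Measurable g → (∃ Cg, ∀ ℓ, |g ℓ| ≤ Cg) →
      ∫ ω, A ω * Y ω * g (Lm ω) ∂(P[|Em])
        = ∫ ω, A ω * μ1 (Lm ω) * g (Lm ω) ∂(P[|Em]))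
    (hreg0 : ∀ g : 𝓛 → ℝ, Measurable g → (∃ Cg, ∀ ℓ, |g ℓ| ≤ Cg) →
      ∫ ω, (1 - A ω) * Y ω * g (Lm ω) ∂(P[|Em])
        = ∫ ω, (1 - A ω) * μ0 (Lm ω) * g (Lm ω) ∂(P[|Em])) :
    ∫ ω, ((Ej.indicator (fun _ => (1 : ℝ)) ω / (P Ej).toReal)
          * (μ1 (Lj ω) - μ0 (Lj ω))
        + (Em.indicator (fun _ => (1 : ℝ)) ω / (P Em).toReal) * ξ (Lm ω)
          * ((A ω / π (Lm ω)) * (Y ω - μ1 (Lm ω))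
            - ((1 - A ω) / (1 - π (Lm ω))) * (Y ω - μ0 (Lm ω)))) ∂P
      = ∫ ℓ, (μ1 ℓ - μ0 ℓ) ∂ν := by
  obtain ⟨hε0, hεhalf⟩ := hε
  haveI hP'prob : IsProbabilityMeasure (P[|Em]) :=
    cond_isProbabilityMeasure (μ := P) (s := Em) hEmpos.ne'
  -- nonnegative bound constants
  set C0 : ℝ := |C| with hC0def
  set Cμ0 : ℝ := |Cμ| with hCμ0def
  set Cξ0 : ℝ := |Cξ| with hCξ0def
  have hC00 : (0:ℝ) ≤ C0 := abs_nonneg C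
  have hCμ00 : (0:ℝ) ≤ Cμ0 := abs_nonneg Cμ
  have hCξ00 : (0:ℝ) ≤ Cξ0 := abs_nonneg Cξ
  have hYb' : ∀ ω, |Y ω| ≤ C0 := fun ω => (hYb ω).trans (le_abs_self C)
  have hμ1b' : ∀ ℓ, |μ1 ℓ| ≤ Cμ0 := fun ℓ => (hμ1b ℓ).trans (le_abs_self Cμ)
  have hμ0b' : ∀ ℓ, |μ0 ℓ| ≤ Cμ0 := fun ℓ => (hμ0b ℓ).trans (le_abs_self Cμ)
  have hξb' : ∀ ℓ, |ξ ℓ| ≤ Cξ0 := fun ℓ => by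
    rw [abs_of_nonneg (hξ0 ℓ)]; exact (hξb ℓ).trans (le_abs_self Cξ)
  have hAb : ∀ ω, |A ω| ≤ 1 := by
    intro ω; rcases hA01 ω with h | h <;> simp [h]
  have hA1b : ∀ ω, |1 - A ω| ≤ 1 := by
    intro ω; rcases hA01 ω with h | h <;> simp [h]
  -- truncated propensity score
  set π' : 𝓛 → ℝ := fun ℓ => max ε (min (π ℓ) (1 - ε)) with hπ'def
  have hπ'meas : Measurable π' := measurable_const.max (hπ.min measurable_const)
  have hπ'lb : ∀ ℓ, ε ≤ π' ℓ := fun ℓ => le_max_left _ _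
  have hπ'ub : ∀ ℓ, π' ℓ ≤ 1 - ε := fun ℓ =>
    max_le (by linarith) (min_le_right _ _)
  have hπ'pos : ∀ ℓ, 0 < π' ℓ := fun ℓ => lt_of_lt_of_le hε0 (hπ'lb ℓ)
  have h1π'pos : ∀ ℓ, 0 < 1 - π' ℓ := fun ℓ => by have := hπ'ub ℓ; linarith
  have h1π'lb : ∀ ℓ, ε ≤ 1 - π' ℓ := fun ℓ => by have := hπ'ub ℓ; linarith
  have hπ'eq : ∀ ℓ, ε ≤ π ℓ → π ℓ ≤ 1 - ε → π' ℓ = π ℓ := by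
    intro ℓ h1 h2
    rw [hπ'def]
    simp only []
    rw [min_eq_left h2, max_eq_right h1]
  -- the weights g1 and g0
  set g1 : 𝓛 → ℝ := fun ℓ => ξ ℓ / π' ℓ with hg1def
  set g0 : 𝓛 → ℝ := fun ℓ => ξ ℓ / (1 - π' ℓ) with hg0def
  have hg1meas : Measurable g1 := hξ.div hπ'meas
  have hg0meas : Measurable g0 := hξ.div (measurable_const.sub hπ'meas)
  have hg1b : ∀ ℓ, |g1 ℓ| ≤ Cξ0 / ε := by
    intro ℓ
    rw [hg1def]
    simp only []
    rw [abs_div, abs_of_pos (hπ'pos ℓ)]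
    exact div_le_div₀ hCξ00 (hξb' ℓ) hε0 (hπ'lb ℓ)
  have hg0b : ∀ ℓ, |g0 ℓ| ≤ Cξ0 / ε := by
    intro ℓ
    rw [hg0def]
    simp only []
    rw [abs_div, abs_of_pos (h1π'pos ℓ)]
    exact div_le_div₀ hCξ00 (hξb' ℓ) hε0 (h1π'lb ℓ)
  -- components of the influence function (with truncated π')
  set h : 𝓛 → ℝ := fun ℓ => μ1 ℓ - μ0 ℓ with hhdef
  have hhmeas : Measurable h := hμ1.sub hμ0
  have hhb : ∀ ℓ, |h ℓ| ≤ Cμ0 + Cμ0 := fun ℓ =>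
    (abs_sub _ _).trans (add_le_add (hμ1b' ℓ) (hμ0b' ℓ))
  set G : Ω → ℝ := fun ω => (A ω / π' (Lm ω)) * (Y ω - μ1 (Lm ω))
      - ((1 - A ω) / (1 - π' (Lm ω))) * (Y ω - μ0 (Lm ω)) with hGdef
  set F : Ω → ℝ := fun ω => ξ (Lm ω) * G ω with hFdef
  have hGmeas : Measurable G :=
    ((hA.div (hπ'meas.comp hLm)).mul (hY.sub (hμ1.comp hLm))).sub
      (((measurable_const.sub hA).div (measurable_const.sub (hπ'meas.comp hLm))).mul
        (hY.sub (hμ0.comp hLm)))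
  have hFmeas : Measurable F := (hξ.comp hLm).mul hGmeas
  set KG : ℝ := (1 / ε) * (C0 + Cμ0) + (1 / ε) * (C0 + Cμ0) with hKGdef
  have hKG0 : (0:ℝ) ≤ KG := by rw [hKGdef]; positivity
  have hGb : ∀ ω, |G ω| ≤ KG := by
    intro ω
    have hb1 : |A ω / π' (Lm ω)| ≤ 1 / ε := by
      rw [abs_div, abs_of_pos (hπ'pos _)]
      exact div_le_div₀ zero_le_one (hAb ω) hε0 (hπ'lb _)
    have hb2 : |(1 - A ω) / (1 - π' (Lm ω))| ≤ 1 / ε := by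
      rw [abs_div, abs_of_pos (h1π'pos _)]
      exact div_le_div₀ zero_le_one (hA1b ω) hε0 (h1π'lb _)
    have hb3 : |Y ω - μ1 (Lm ω)| ≤ C0 + Cμ0 :=
      (abs_sub _ _).trans (add_le_add (hYb' ω) (hμ1b' _))
    have hb4 : |Y ω - μ0 (Lm ω)| ≤ C0 + Cμ0 :=
      (abs_sub _ _).trans (add_le_add (hYb' ω) (hμ0b' _))
    calc |G ω| ≤ |A ω / π' (Lm ω) * (Y ω - μ1 (Lm ω))|
        + |(1 - A ω) / (1 - π' (Lm ω)) * (Y ω - μ0 (Lm ω))| := abs_sub _ _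
      _ ≤ KG := by
          rw [hKGdef, abs_mul, abs_mul]
          exact add_le_add
            (mul_le_mul hb1 hb3 (abs_nonneg _) (by positivity))
            (mul_le_mul hb2 hb4 (abs_nonneg _) (by positivity))
  have hFb : ∀ ω, |F ω| ≤ Cξ0 * KG := by
    intro ω
    rw [hFdef]
    simp only []
    rw [abs_mul]
    exact mul_le_mul (hξb' _) (hGb ω) (abs_nonneg _) hCξ00
  -- the two terms of the influence function (with truncated π')
  set T1 : Ω → ℝ := fun ω =>
    (Ej.indicator (fun _ => (1 : ℝ)) ω / (P Ej).toReal) * h (Lj ω) with hT1def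
  set T2 : Ω → ℝ := fun ω =>
    (Em.indicator (fun _ => (1 : ℝ)) ω / (P Em).toReal) * F ω with hT2def
  have hcj : (0:ℝ) < (P Ej).toReal :=
    ENNReal.toReal_pos hEjpos.ne' (measure_ne_top P Ej)
  have hcm : (0:ℝ) < (P Em).toReal :=
    ENNReal.toReal_pos hEmpos.ne' (measure_ne_top P Em)
  have hT1meas : Measurable T1 :=
    ((measurable_one.indicator hEj).div_const _).mul (hhmeas.comp hLj)
  have hT2meas : Measurable T2 :=
    ((measurable_one.indicator hEm).div_const _).mul hFmeas
  have hindb : ∀ (E : Set Ω) (ω : Ω), |E.indicator (fun _ => (1:ℝ)) ω| ≤ 1 := by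
    intro E ω; by_cases hω : ω ∈ E <;> simp [hω]
  have hT1b : ∀ ω, |T1 ω| ≤ (P Ej).toReal⁻¹ * (Cμ0 + Cμ0) := by
    intro ω
    rw [hT1def]
    simp only []
    rw [abs_mul, abs_div, abs_of_pos hcj, div_eq_mul_inv]
    exact mul_le_mul (by
      rw [mul_comm]
      exact mul_le_of_le_one_right (by positivity) (hindb Ej ω)) (hhb _)
      (abs_nonneg _) (by positivity)
  have hT2b : ∀ ω, |T2 ω| ≤ (P Em).toReal⁻¹ * (Cξ0 * KG) := by
    intro ω
    rw [hT2def]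
    simp only []
    rw [abs_mul, abs_div, abs_of_pos hcm, div_eq_mul_inv]
    exact mul_le_mul (by
      rw [mul_comm]
      exact mul_le_of_le_one_right (by positivity) (hindb Em ω)) (hFb ω)
      (abs_nonneg _) (by positivity)
  have hT1int : Integrable T1 P := integrable_of_bdd' hT1meas.aestronglyMeasurable hT1b
  have hT2int : Integrable T2 P := integrable_of_bdd' hT2meas.aestronglyMeasurable hT2b
  -- the original integrand agrees with T1 + T2 almost everywhere
  have hae : (fun ω => (Ej.indicator (fun _ => (1 : ℝ)) ω / (P Ej).toReal)
          * (μ1 (Lj ω) - μ0 (Lj ω))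
        + (Em.indicator (fun _ => (1 : ℝ)) ω / (P Em).toReal) * ξ (Lm ω)
          * ((A ω / π (Lm ω)) * (Y ω - μ1 (Lm ω))
            - ((1 - A ω) / (1 - π (Lm ω))) * (Y ω - μ0 (Lm ω))))
      =ᵐ[P] (fun ω => T1 ω + T2 ω) := by
    set N : Set Ω := {ω | ¬ (ε ≤ π (Lm ω) ∧ π (Lm ω) ≤ 1 - ε)} with hNdef
    have hNmeas : MeasurableSet N := by
      have : MeasurableSet {ω | ε ≤ π (Lm ω) ∧ π (Lm ω) ≤ 1 - ε} :=
        ((measurableSet_le measurable_const (hπ.comp hLm)).inter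
          (measurableSet_le (hπ.comp hLm) measurable_const))
      exact this.compl
    have hNnull : (P[|Em]) N = 0 := by
      have := hπbd
      rw [ae_iff] at this
      exact this
    have hEmN : P (Em ∩ N) = 0 := by
      rw [cond_apply hEm] at hNnull
      rcases mul_eq_zero.mp hNnull with hc | hc
      · exact absurd hc (ENNReal.inv_ne_zero.mpr (measure_ne_top P Em))
      · exact hc
    refine (ae_iff.mpr ?_)
    refine measure_mono_null ?_ hEmN
    intro ω hω
    simp only [Set.mem_setOf_eq] at hω
    by_contra hcon
    apply hω
    simp only [Set.mem_inter_iff, Set.mem_setOf_eq] at hcon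
    push_neg at hcon
    by_cases hωm : ω ∈ Em
    · have hnN : ω ∉ N := hcon hωm
      rw [hNdef] at hnN
      simp only [Set.mem_setOf_eq, not_not] at hnN
      obtain ⟨h1, h2⟩ := hnN
      have hπeq : π' (Lm ω) = π (Lm ω) := hπ'eq _ h1 h2
      rw [hT1def, hT2def, hFdef, hGdef, hhdef]
      simp only [hπeq]
      ring
    · rw [hT1def, hT2def, hFdef]
      simp only [Set.indicator_of_notMem hωm]
      ring
  rw [integral_congr_ae hae, integral_add hT1int hT2int]
  -- first term equals ∫ h dν
  have hterm1 : ∫ ω, T1 ω ∂P = ∫ ℓ, (μ1 ℓ - μ0 ℓ) ∂ν := by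
    rw [hT1def]
    rw [integral_cond_eq' P hEj (fun ω => h (Lj ω))]
    rw [hν, integral_map hLj.aemeasurable hhmeas.aestronglyMeasurable]
  -- second term is zero
  have hterm2 : ∫ ω, T2 ω ∂P = 0 := by
    rw [hT2def]
    rw [integral_cond_eq' P hEm F]
    -- rewrite F as combination of the four regression terms
    have hFeq : ∀ ω, F ω = (A ω * Y ω * g1 (Lm ω) - A ω * μ1 (Lm ω) * g1 (Lm ω))
        - ((1 - A ω) * Y ω * g0 (Lm ω) - (1 - A ω) * μ0 (Lm ω) * g0 (Lm ω)) := by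
      intro ω
      rw [hFdef, hGdef, hg1def, hg0def]
      simp only []
      have h1 : π' (Lm ω) ≠ 0 := (hπ'pos _).ne'
      have h2 : (1:ℝ) - π' (Lm ω) ≠ 0 := (h1π'pos _).ne'
      field_simp
    have i1 : Integrable (fun ω => A ω * Y ω * g1 (Lm ω)) (P[|Em]) :=
      integrable_of_bdd' ((hA.mul hY).mul (hg1meas.comp hLm)).aestronglyMeasurable
        (C := 1 * C0 * (Cξ0 / ε)) (fun ω => by
          rw [abs_mul, abs_mul]
          exact mul_le_mul (mul_le_mul (hAb ω) (hYb' ω) (abs_nonneg _) zero_le_one)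
            (hg1b _) (abs_nonneg _) (by positivity))
    have i2 : Integrable (fun ω => A ω * μ1 (Lm ω) * g1 (Lm ω)) (P[|Em]) :=
      integrable_of_bdd' ((hA.mul (hμ1.comp hLm)).mul (hg1meas.comp hLm)).aestronglyMeasurable
        (C := 1 * Cμ0 * (Cξ0 / ε)) (fun ω => by
          rw [abs_mul, abs_mul]
          exact mul_le_mul (mul_le_mul (hAb ω) (hμ1b' _) (abs_nonneg _) zero_le_one)
            (hg1b _) (abs_nonneg _) (by positivity))
    have i3 : Integrable (fun ω => (1 - A ω) * Y ω * g0 (Lm ω)) (P[|Em]) :=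
      integrable_of_bdd' (((measurable_const.sub hA).mul hY).mul
          (hg0meas.comp hLm)).aestronglyMeasurable
        (C := 1 * C0 * (Cξ0 / ε)) (fun ω => by
          rw [abs_mul, abs_mul]
          exact mul_le_mul (mul_le_mul (hA1b ω) (hYb' ω) (abs_nonneg _) zero_le_one)
            (hg0b _) (abs_nonneg _) (by positivity))
    have i4 : Integrable (fun ω => (1 - A ω) * μ0 (Lm ω) * g0 (Lm ω)) (P[|Em]) :=
      integrable_of_bdd' (((measurable_const.sub hA).mul (hμ0.comp hLm)).mul
          (hg0meas.comp hLm)).aestronglyMeasurable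
        (C := 1 * Cμ0 * (Cξ0 / ε)) (fun ω => by
          rw [abs_mul, abs_mul]
          exact mul_le_mul (mul_le_mul (hA1b ω) (hμ0b' _) (abs_nonneg _) zero_le_one)
            (hg0b _) (abs_nonneg _) (by positivity))
    calc ∫ ω, F ω ∂(P[|Em])
        = ∫ ω, ((A ω * Y ω * g1 (Lm ω) - A ω * μ1 (Lm ω) * g1 (Lm ω))
            - ((1 - A ω) * Y ω * g0 (Lm ω) - (1 - A ω) * μ0 (Lm ω) * g0 (Lm ω)))
              ∂(P[|Em]) := by
          exact integral_congr_ae (ae_of_all _ hFeq)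
      _ = (∫ ω, A ω * Y ω * g1 (Lm ω) ∂(P[|Em])
            - ∫ ω, A ω * μ1 (Lm ω) * g1 (Lm ω) ∂(P[|Em]))
          - (∫ ω, (1 - A ω) * Y ω * g0 (Lm ω) ∂(P[|Em])
            - ∫ ω, (1 - A ω) * μ0 (Lm ω) * g0 (Lm ω) ∂(P[|Em])) := by
          have i12 : Integrable (fun ω => A ω * Y ω * g1 (Lm ω)
              - A ω * μ1 (Lm ω) * g1 (Lm ω)) (P[|Em]) := i1.sub i2
          have i34 : Integrable (fun ω => (1 - A ω) * Y ω * g0 (Lm ω)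
              - (1 - A ω) * μ0 (Lm ω) * g0 (Lm ω)) (P[|Em]) := i3.sub i4
          rw [integral_sub i12 i34, integral_sub i1 i2, integral_sub i3 i4]
      _ = 0 := by
          rw [hreg1 g1 hg1meas ⟨Cξ0 / ε, hg1b⟩, hreg0 g0 hg0meas ⟨Cξ0 / ε, hg0b⟩]
          ring
  rw [hterm1, hterm2, add_zero]
end
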